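/- arXiv:2501.03516 — 6 statements merged into one kernel-verified Lean document; each statement's English description precedes it below -/
import Mathlib

section
/- Let q and n be coprime positive integers, γ ∈ ℤ/nℤ, and let τ be the size of the q-cyclotomic coset c(γ) = {γ, γq, γq², …} modulo n. Assume τ ∣ n. Then c(γ) is of equal difference, i.e., c(γ) = {γ, γ + n/τ, γ + 2(n/τ), …, γ + (τ−1)(n/τ)} as subsets of ℤ/nℤ, if and only if γq ≡ γ (mod n/τ). -/
/-- The `q`-cyclotomic coset of `γ` modulo `n`, i.e. `{γ q^j : j ≥ 0} ⊆ ℤ/nℤ`. -/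
def coset (n q : ℕ) (γ : ZMod n) : Set (ZMod n) := {x | ∃ j : ℕ, x = γ * (q : ZMod n) ^ j}

/-- `τ` is the size of the coset: the least positive `t` with `γ q^t ≡ γ (mod n)`. -/
def cosetSize (n q : ℕ) (γ : ZMod n) (τ : ℕ) : Prop :=
  IsLeast {t : ℕ | 0 < t ∧ γ * (q : ZMod n) ^ t = γ} τ

/-- The arithmetic progression `{δ + k (n/μ) : 0 ≤ k < μ}` in `ℤ/nℤ`. -/
def progression (n : ℕ) (δ : ZMod n) (μ : ℕ) : Set (ZMod n) :=
  {x | ∃ k < μ, x = δ + ((k * (n / μ) : ℕ) : ZMod n)}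

/-- The coset `c_{n/q}(γ)` is of equal difference. -/
def IsEqDiffCoset (n q : ℕ) (γ : ZMod n) : Prop :=
  ∃ τ : ℕ, cosetSize n q γ τ ∧ τ ∣ n ∧ coset n q γ = progression n γ τ

/-- The radical of `m`: the product of its distinct prime divisors. -/
def rad (m : ℕ) : ℕ := ∏ p ∈ m.primeFactors, p

/-
The orbit `γ, γq, γq², …` is the forward orbit of `γ` under `x ↦ xq`, and the least `τ` with
`γq^τ = γ` is its minimal period, so the coset has exactly `τ` elements. With `d = n/τ`, the
progression is exactly the residue class of `γ` modulo `d`, which also has `τ` elements. If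
`γq ≡ γ (mod d)` then every `γq^j ≡ γ (mod d)`, so the coset lies in that class and, having the
same size, equals it; conversely `γq` lies in the coset, hence in the class of `γ`.
-/

open Function

theorem Function.ncard_range_iterate_of_mem_periodicPts {α : Type*} {f : α → α} {x : α}
    (hx : x ∈ periodicPts f) : (Set.range (f^[·] x)).ncard = minimalPeriod f x := by
  have hrange : Set.range (f^[·] x) = (f^[·] x) '' Set.Iio (minimalPeriod f x) := by
    refine (Set.range_subset_iff.2 fun j => ?_).antisymm (Set.image_subset_range _ _)
    exact ⟨j % minimalPeriod f x, Nat.mod_lt j (minimalPeriod_pos_of_mem_periodicPts hx),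
      iterate_mod_minimalPeriod_eq⟩
  rw [hrange, iterate_injOn_Iio_minimalPeriod.ncard_image, Set.ncard_Iio_nat]

theorem minimalPeriod_mul_right_eq_of_isLeast {M : Type*} [Monoid M] {x a : M} {τ : ℕ}
    (h : IsLeast {t : ℕ | 0 < t ∧ x * a ^ t = x} τ) : minimalPeriod (· * a) x = τ := by
  have hper : IsPeriodicPt (· * a) τ x := by
    rw [IsPeriodicPt, IsFixedPt, mul_right_iterate_apply]
    exact h.1.2
  refine le_antisymm (hper.minimalPeriod_le h.1.1) (h.2 ⟨hper.minimalPeriod_pos h.1.1, ?_⟩)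
  rw [← mul_right_iterate_apply]
  exact iterate_minimalPeriod

theorem map_mul_pow_eq_of_map_mul_eq {M N F : Type*} [Monoid M] [Monoid N] [FunLike F M N]
    [MonoidHomClass F M N] (f : F) {x a : M} (h : f (x * a) = f x) (j : ℕ) :
    f (x * a ^ j) = f x := by
  have hfix : IsFixedPt (· * f a) (f x) := by
    rw [IsFixedPt, ← map_mul]
    exact h
  have hfix_pow := hfix.iterate j
  rwa [IsFixedPt, mul_right_iterate_apply, ← map_pow, ← map_mul] at hfix_pow

theorem coset_eq_range_iterate (n q : ℕ) (γ : ZMod n) :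
    coset n q γ = Set.range ((· * (q : ZMod n))^[·] γ) := by
  ext x
  simp [coset, eq_comm]

theorem ncard_coset {n q τ : ℕ} {γ : ZMod n} (hτ : cosetSize n q γ τ) :
    (coset n q γ).ncard = τ := by
  have hmin := minimalPeriod_mul_right_eq_of_isLeast hτ
  rw [coset_eq_range_iterate, Function.ncard_range_iterate_of_mem_periodicPts, hmin]
  exact minimalPeriod_pos_iff_mem_periodicPts.1 (hmin ▸ hτ.1.1)

theorem progression_eq_setOf_castHom {n τ : ℕ} [NeZero n] (hdvd : τ ∣ n) (δ : ZMod n) :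
    progression n δ τ = {x | ZMod.castHom (Nat.div_dvd_of_dvd hdvd) (ZMod (n / τ)) x =
      ZMod.castHom (Nat.div_dvd_of_dvd hdvd) (ZMod (n / τ)) δ} := by
  set f := ZMod.castHom (Nat.div_dvd_of_dvd hdvd) (ZMod (n / τ))
  ext x
  simp only [progression, Set.mem_ofPred_eq]
  constructor
  · rintro ⟨k, -, rfl⟩
    rw [map_add, map_natCast, (ZMod.natCast_eq_zero_iff _ _).2 (dvd_mul_left _ _), add_zero]
  · intro hx
    obtain ⟨k, hk⟩ : n / τ ∣ (x - δ).val := by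
      rw [← ZMod.natCast_eq_zero_iff, ← map_natCast f, ZMod.natCast_zmod_val, map_sub, hx,
        sub_self]
    refine ⟨k, ?_, ?_⟩
    · have hval : n / τ * k < n / τ * τ := by
        rw [← hk, Nat.div_mul_cancel hdvd]
        exact (x - δ).val_lt
      exact Nat.lt_of_mul_lt_mul_left hval
    · rw [mul_comm, ← hk, ZMod.natCast_zmod_val, add_sub_cancel]

theorem ncard_progression {n τ : ℕ} [NeZero n] (hdvd : τ ∣ n) (δ : ZMod n) :
    (progression n δ τ).ncard = τ := by
  have hτ : 0 < τ := Nat.pos_of_dvd_of_pos hdvd (NeZero.pos n)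
  have hd : 0 < n / τ := Nat.div_pos (Nat.le_of_dvd (NeZero.pos n) hdvd) hτ
  have hprog :
      progression n δ τ = (fun k : ℕ => δ + ((k * (n / τ) : ℕ) : ZMod n)) '' Set.Iio τ := by
    ext x
    simp [progression, eq_comm]
  have hinj : (Set.Iio τ).InjOn fun k : ℕ => δ + ((k * (n / τ) : ℕ) : ZMod n) := by
    have hlt : ∀ k < τ, k * (n / τ) < n := fun k hk => by
      simpa only [Nat.mul_div_cancel' hdvd] using Nat.mul_lt_mul_of_pos_right hk hd
    intro i hi j hj hij
    rw [add_right_inj, ZMod.natCast_eq_natCast_iff', Nat.mod_eq_of_lt (hlt i hi),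
      Nat.mod_eq_of_lt (hlt j hj)] at hij
    exact Nat.eq_of_mul_eq_mul_right hd hij
  rw [hprog, hinj.ncard_image, Set.ncard_Iio_nat]

theorem eq_diff_iff_congr_general (n q τ : ℕ) (hn : 0 < n)
    (γ : ZMod n) (hτ : cosetSize n q γ τ) (hdvd : τ ∣ n) :
    coset n q γ = progression n γ τ ↔
      ZMod.castHom (Nat.div_dvd_of_dvd hdvd) (ZMod (n / τ)) (γ * (q : ZMod n)) =
        ZMod.castHom (Nat.div_dvd_of_dvd hdvd) (ZMod (n / τ)) γ := by
  have : NeZero n := ⟨hn.ne'⟩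
  have hcard : (progression n γ τ).ncard ≤ (coset n q γ).ncard := by
    rw [ncard_progression hdvd, ncard_coset hτ]
  rw [progression_eq_setOf_castHom hdvd] at hcard ⊢
  constructor
  · intro h
    have hmem : γ * (q : ZMod n) ∈ coset n q γ := ⟨1, by rw [pow_one]⟩
    rwa [h] at hmem
  · intro hcong
    refine Set.eq_of_subset_of_ncard_le ?_ hcard (Set.toFinite _)
    rintro _ ⟨j, rfl⟩
    exact map_mul_pow_eq_of_map_mul_eq _ hcong j

/-- A coset of size `τ` with `τ ∣ n` is equal-difference iff `γ q ≡ γ (mod n/τ)`. -/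
theorem eq_diff_iff_congr (n q τ : ℕ) (hn : 0 < n) (hq : 0 < q) (hco : Nat.Coprime q n)
    (γ : ZMod n) (hτ : cosetSize n q γ τ) (hdvd : τ ∣ n) :
    coset n q γ = progression n γ τ ↔
      ZMod.castHom (Nat.div_dvd_of_dvd hdvd) (ZMod (n / τ)) (γ * (q : ZMod n)) =
        ZMod.castHom (Nat.div_dvd_of_dvd hdvd) (ZMod (n / τ)) γ :=
  eq_diff_iff_congr_general n q τ hn γ hτ hdvd
end

section
/- Let q be a prime power and n a positive integer coprime to q. All q-cyclotomic cosets modulo n are equal-difference cosets if and only if (i) rad(n) ∣ q − 1, and (ii) if 8 ∣ n then q ≡ 1 (mod 4). -/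
/-!
Let `m` be the additive order of `γ` and `τ = ord_m q`, the size of the coset of `γ`. Since
`γ q^j - γ = γ (q - 1)(1 + q + ⋯ + q^(j-1))`, the coset lies in the progression `γ + (n/τ)ℤ` iff
`m ∣ (q - 1) τ`, and both sets have `τ` elements. Every `m ∣ n` is an additive order, so all
cosets are equal-difference iff `ord_m q ∣ n` and `m ∣ (q - 1) ord_m q` for every `m ∣ n`.
For `m = p` prime, `ord_p q ∣ p - 1` is prime to `p`, which forces `p ∣ q - 1`; for `m = 8`,
`ord_8 q ∣ 2` forces `4 ∣ q - 1`. Conversely, under (i) and (ii) lifting the exponent gives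
`v_p(q^t - 1) = v_p((q - 1) t)` for every prime `p ∣ n`, except when `p = 2` and `q ≡ 3 (mod 4)`;
then `v_2(m) ≤ 2` and both numbers agree modulo 4. Hence `m ∣ q^t - 1 ↔ m ∣ (q - 1) t`, which
gives both `ord_m q ∣ m` and `m ∣ (q - 1) ord_m q`.
-/

open Finset

theorem rad_dvd_iff {m a : ℕ} : rad m ∣ a ↔ ∀ p ∈ m.primeFactors, p ∣ a :=
  ⟨fun h _ hp => (dvd_prod_of_mem _ hp).trans h,
    prod_primes_dvd _ fun _ hp => (Nat.prime_of_mem_primeFactors hp).prime⟩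

theorem Int.emultiplicity_pow_sub_one {p : ℕ} {q : ℤ} (hp : p.Prime) (hpq : (p : ℤ) ∣ q - 1)
    (hp4 : Odd p ∨ 4 ∣ q - 1) (t : ℕ) :
    emultiplicity (p : ℤ) (q ^ t - 1) = emultiplicity (p : ℤ) ((q - 1) * t) := by
  have hpq' : ¬(p : ℤ) ∣ q := fun h =>
    Nat.prime_iff_prime_int.mp hp |>.not_dvd_one ((dvd_sub_right h).mp hpq)
  rw [emultiplicity_mul (Nat.prime_iff_prime_int.mp hp)]
  rcases hp.eq_two_or_odd' with rfl | hodd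
  · simpa using Int.two_pow_sub_pow' (y := 1) t (hp4.resolve_left (by decide)) hpq'
  · simpa [Int.natCast_emultiplicity] using
      Int.emultiplicity_pow_sub_pow hp hodd (y := 1) hpq hpq' t

theorem Int.pow_sub_one_modEq_sub_one_mul {q : ℤ} (hq : q ≡ 3 [ZMOD 4]) (t : ℕ) :
    q ^ t - 1 ≡ (q - 1) * t [ZMOD 4] := by
  refine (ZMod.intCast_eq_intCast_iff _ _ 4).mp ?_
  push_cast
  rw [(ZMod.intCast_eq_intCast_iff _ 3 4).mpr hq]
  obtain ⟨s, rfl | rfl⟩ := Nat.even_or_odd' t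
  all_goals
    push_cast
    simp only [pow_add, pow_mul, show (3 : ZMod 4) ^ 2 = 1 by decide, one_pow]
    generalize (s : ZMod 4) = x
    revert x
    decide

theorem prime_pow_dvd_pow_sub_one_iff {p k t : ℕ} {q : ℤ} (hp : p.Prime) (hpq : (p : ℤ) ∣ q - 1)
    (h8 : p = 2 → 3 ≤ k → 4 ∣ q - 1) :
    (p : ℤ) ^ k ∣ q ^ t - 1 ↔ (p : ℤ) ^ k ∣ (q - 1) * t := by
  by_cases hp4 : Odd p ∨ 4 ∣ q - 1
  · rw [pow_dvd_iff_le_emultiplicity, pow_dvd_iff_le_emultiplicity,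
      Int.emultiplicity_pow_sub_one hp hpq hp4]
  rw [not_or] at hp4
  obtain rfl : p = 2 := hp.eq_two_or_odd'.resolve_right hp4.1
  have hk : k ≤ 2 := by
    by_contra h
    exact hp4.2 (h8 rfl (by omega))
  have hq : q ≡ 3 [ZMOD 4] := by
    rw [Int.ModEq]
    omega
  exact ((Int.pow_sub_one_modEq_sub_one_mul hq t).of_dvd
    (by simpa using pow_dvd_pow (2 : ℤ) hk)).dvd_iff

theorem dvd_pow_sub_one_iff_dvd_sub_one_mul {m t : ℕ} {q : ℤ}
    (hrad : ∀ p, p.Prime → p ∣ m → (p : ℤ) ∣ q - 1) (h8 : 8 ∣ m → 4 ∣ q - 1) :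
    (m : ℤ) ∣ q ^ t - 1 ↔ (m : ℤ) ∣ (q - 1) * t := by
  rw [Int.natCast_dvd, Int.natCast_dvd, Nat.dvd_iff_prime_pow_dvd_dvd _ m,
    Nat.dvd_iff_prime_pow_dvd_dvd _ m]
  refine forall₄_congr fun p k hp hpk => ?_
  rcases Nat.eq_zero_or_pos k with rfl | hk
  · simp
  rw [← Int.natCast_dvd, ← Int.natCast_dvd, Nat.cast_pow]
  refine prime_pow_dvd_pow_sub_one_iff hp (hrad p hp ((dvd_pow_self p hk.ne').trans hpk)) ?_
  rintro rfl h3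
  exact h8 ((pow_dvd_pow 2 h3).trans hpk)

theorem orderOf_natCast_dvd_iff {m q t : ℕ} :
    orderOf (q : ZMod m) ∣ t ↔ (m : ℤ) ∣ (q : ℤ) ^ t - 1 := by
  rw [orderOf_dvd_iff_pow_eq_one, ← ZMod.intCast_zmod_eq_zero_iff_dvd, Int.cast_sub,
    sub_eq_zero]
  push_cast
  rfl

theorem orderOf_natCast_pos {m q : ℕ} [NeZero m] (hco : q.Coprime m) :
    0 < orderOf (q : ZMod m) := by
  rw [← ZMod.coe_unitOfCoprime q hco, orderOf_units]
  exact orderOf_pos _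

theorem natCast_pow_eq_natCast_pow_iff {m q : ℕ} (hco : q.Coprime m) {i j : ℕ} :
    (q : ZMod m) ^ i = (q : ZMod m) ^ j ↔
      i % orderOf (q : ZMod m) = j % orderOf (q : ZMod m) := by
  rw [← ZMod.coe_unitOfCoprime q hco, ← Units.val_pow_eq_pow_val, ← Units.val_pow_eq_pow_val,
    Units.val_inj, pow_inj_mod, orderOf_units]

theorem prime_dvd_sub_one_of_dvd_sub_one_mul_orderOf {p q : ℕ} [Fact p.Prime] (hpq : ¬p ∣ q)
    (h : (p : ℤ) ∣ ((q : ℤ) - 1) * orderOf (q : ZMod p)) : (p : ℤ) ∣ (q : ℤ) - 1 := by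
  have hp := (Fact.out : p.Prime)
  have hp1 : 0 < p - 1 := Nat.sub_pos_of_lt hp.one_lt
  have hord : orderOf (q : ZMod p) ∣ p - 1 :=
    ZMod.orderOf_dvd_card_sub_one (by rwa [Ne, ZMod.natCast_eq_zero_iff])
  refine (Int.Prime.dvd_mul' hp h).resolve_right fun hdvd => ?_
  have h1 := Nat.le_of_dvd (Nat.pos_of_dvd_of_pos hord hp1) (Int.natCast_dvd_natCast.mp hdvd)
  have h2 := Nat.le_of_dvd hp1 hord
  omega

theorem four_dvd_sub_one_of_eight_dvd_sub_one_mul_orderOf {q : ℕ} (hq : Odd q)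
    (h : (8 : ℤ) ∣ ((q : ℤ) - 1) * orderOf (q : ZMod 8)) : (4 : ℤ) ∣ (q : ℤ) - 1 := by
  have hord : orderOf (q : ZMod 8) ∣ 2 :=
    orderOf_natCast_dvd_iff.mpr (Int.eight_dvd_sq_sub_one_of_odd hq.natCast)
  rcases (Nat.dvd_prime Nat.prime_two).mp hord with h1 | h2
  · rw [h1] at h
    omega
  · rw [h2] at h
    omega

theorem orderOf_natCast_dvd_and_dvd_sub_one_mul_orderOf {m q : ℕ}
    (hrad : ∀ p, p.Prime → p ∣ m → (p : ℤ) ∣ (q : ℤ) - 1) (h8 : 8 ∣ m → 4 ∣ (q : ℤ) - 1) :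
    orderOf (q : ZMod m) ∣ m ∧ (m : ℤ) ∣ ((q : ℤ) - 1) * orderOf (q : ZMod m) := by
  have key (t : ℕ) := dvd_pow_sub_one_iff_dvd_sub_one_mul (t := t) hrad h8
  exact ⟨orderOf_natCast_dvd_iff.mpr ((key m).mpr (dvd_mul_left _ _)),
    (key _).mp (orderOf_natCast_dvd_iff.mp dvd_rfl)⟩

section Cosets

variable {n q : ℕ}

instance [NeZero n] (γ : ZMod n) : NeZero (addOrderOf γ) := ⟨(addOrderOf_pos γ).ne'⟩

theorem mul_intCast_eq_zero_iff (γ : ZMod n) (a : ℤ) :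
    γ * a = 0 ↔ (addOrderOf γ : ℤ) ∣ a := by
  rw [addOrderOf_dvd_iff_zsmul_eq_zero, zsmul_eq_mul, mul_comm]

theorem mul_natCast_eq_mul_natCast_iff (γ : ZMod n) (a b : ℕ) :
    γ * a = γ * b ↔ (a : ZMod (addOrderOf γ)) = b := by
  have h := mul_intCast_eq_zero_iff γ ((a : ℤ) - b)
  push_cast at h
  rw [← sub_eq_zero, ← mul_sub, h, ← ZMod.intCast_eq_intCast_iff_dvd_sub, eq_comm]
  push_cast
  rfl

theorem mul_pow_eq_mul_pow_iff (γ : ZMod n) (hco : q.Coprime (addOrderOf γ)) {i j : ℕ} :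
    γ * (q : ZMod n) ^ i = γ * (q : ZMod n) ^ j ↔
      i % orderOf (q : ZMod (addOrderOf γ)) = j % orderOf (q : ZMod (addOrderOf γ)) := by
  rw [← natCast_pow_eq_natCast_pow_iff hco]
  exact_mod_cast mul_natCast_eq_mul_natCast_iff γ (q ^ i) (q ^ j)

theorem cosetSize_orderOf [NeZero n] (γ : ZMod n) (hco : q.Coprime (addOrderOf γ)) :
    cosetSize n q γ (orderOf (q : ZMod (addOrderOf γ))) := by
  have hfix : ∀ t, γ * (q : ZMod n) ^ t = γ ↔ orderOf (q : ZMod (addOrderOf γ)) ∣ t := by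
    intro t
    simpa [Nat.dvd_iff_mod_eq_zero] using mul_pow_eq_mul_pow_iff γ hco (i := t) (j := 0)
  exact ⟨⟨orderOf_natCast_pos hco, (hfix _).mpr dvd_rfl⟩,
    fun t ht => Nat.le_of_dvd ht.1 ((hfix t).mp ht.2)⟩

theorem ncard_coset_s7 [NeZero n] (γ : ZMod n) (hco : q.Coprime (addOrderOf γ)) :
    (coset n q γ).ncard = orderOf (q : ZMod (addOrderOf γ)) := by
  set τ := orderOf (q : ZMod (addOrderOf γ))
  have hτ : 0 < τ := orderOf_natCast_pos hco
  have himage : coset n q γ = ((range τ).image fun j => γ * (q : ZMod n) ^ j : Finset _) := by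
    ext x
    simp only [coset, coe_image, coe_range, Set.mem_ofPred_eq, Set.mem_image, Set.mem_Iio]
    constructor
    · rintro ⟨j, rfl⟩
      exact ⟨j % τ, Nat.mod_lt j hτ, (mul_pow_eq_mul_pow_iff γ hco).mpr (Nat.mod_mod j τ)⟩
    · rintro ⟨j, -, rfl⟩
      exact ⟨j, rfl⟩
  rw [himage, Set.ncard_coe_finset, card_image_of_injOn, card_range]
  intro i hi j hj hij
  have := (mul_pow_eq_mul_pow_iff γ hco).mp hij
  rwa [Nat.mod_eq_of_lt (mem_range.mp hi), Nat.mod_eq_of_lt (mem_range.mp hj)] at this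

theorem ncard_progression_le (δ : ZMod n) (μ : ℕ) : (progression n δ μ).ncard ≤ μ := by
  have : progression n δ μ =
      ((range μ).image fun k => δ + ((k * (n / μ) : ℕ) : ZMod n) : Finset _) := by
    ext x
    simp [progression, eq_comm]
  rw [this, Set.ncard_coe_finset]
  exact card_image_le.trans (card_range μ).le

theorem mul_sub_eq_zero_of_mem_progression {δ x : ZMod n} {μ : ℕ} (hμ : μ ∣ n)
    (hx : x ∈ progression n δ μ) : (μ : ZMod n) * (x - δ) = 0 := by
  obtain ⟨k, -, rfl⟩ := hx
  rw [add_sub_cancel_left, ← Nat.cast_mul, mul_left_comm, Nat.mul_div_cancel' hμ,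
    ZMod.natCast_eq_zero_iff]
  exact dvd_mul_left n k

theorem mem_progression_of_mul_sub_eq_zero [NeZero n] {δ x : ZMod n} {μ : ℕ} (hμ : μ ∣ n)
    (h : (μ : ZMod n) * (x - δ) = 0) : x ∈ progression n δ μ := by
  have hμ0 : 0 < μ := Nat.pos_of_dvd_of_pos hμ (NeZero.pos n)
  obtain ⟨c, hc⟩ : n / μ ∣ (x - δ).val := by
    rw [← ZMod.natCast_zmod_val (x - δ), ← Nat.cast_mul, ZMod.natCast_eq_zero_iff] at h
    exact Nat.dvd_of_mul_dvd_mul_left hμ0 (by rwa [Nat.mul_div_cancel' hμ])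
  refine ⟨c, Nat.lt_of_mul_lt_mul_left (a := n / μ) ?_, ?_⟩
  · rw [← hc, Nat.div_mul_cancel hμ]
    exact ZMod.val_lt _
  · rw [mul_comm, ← hc, ZMod.natCast_zmod_val, add_sub_cancel]

theorem isEqDiffCoset_iff [NeZero n] (γ : ZMod n) (hco : q.Coprime (addOrderOf γ)) :
    IsEqDiffCoset n q γ ↔ orderOf (q : ZMod (addOrderOf γ)) ∣ n ∧
      (addOrderOf γ : ℤ) ∣ ((q : ℤ) - 1) * orderOf (q : ZMod (addOrderOf γ)) := by
  set τ := orderOf (q : ZMod (addOrderOf γ))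
  constructor
  · rintro ⟨τ', hsize, hτn, hcoset⟩
    obtain rfl : τ' = τ := hsize.unique (cosetSize_orderOf γ hco)
    have hmem : γ * q ∈ progression n γ τ := hcoset ▸ ⟨1, by rw [pow_one]⟩
    refine ⟨hτn, (mul_intCast_eq_zero_iff γ _).mp ?_⟩
    rw [← mul_sub_eq_zero_of_mem_progression hτn hmem]
    push_cast
    ring
  · rintro ⟨hτn, hdvd⟩
    refine ⟨τ, cosetSize_orderOf γ hco, hτn, Set.eq_of_subset_of_ncard_le ?_ ?_⟩
    · rintro _ ⟨j, rfl⟩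
      refine mem_progression_of_mul_sub_eq_zero hτn ?_
      obtain ⟨S, hS⟩ := sub_one_dvd_pow_sub_one (q : ZMod n) j
      have h := (mul_intCast_eq_zero_iff γ _).mpr hdvd
      push_cast at h
      calc (τ : ZMod n) * (γ * q ^ j - γ) = γ * ((q - 1) * τ) * S := by
            rw [← mul_sub_one, hS]
            ring
        _ = 0 := by rw [h, zero_mul]
    · rw [ncard_coset_s7 γ hco]
      exact ncard_progression_le γ τ

theorem forall_isEqDiffCoset_iff [NeZero n] (hco : q.Coprime n) :
    (∀ γ : ZMod n, IsEqDiffCoset n q γ) ↔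
      ∀ m, m ∣ n →
        orderOf (q : ZMod m) ∣ n ∧ (m : ℤ) ∣ ((q : ℤ) - 1) * orderOf (q : ZMod m) := by
  have hord (γ : ZMod n) : addOrderOf γ ∣ n := addOrderOf_dvd_of_nsmul_eq_zero (by simp)
  constructor
  · intro h m hm
    have hγ : addOrderOf ((n / m : ℕ) : ZMod n) = m := by
      rw [ZMod.addOrderOf_coe _ (NeZero.ne n), Nat.gcd_eq_right (Nat.div_dvd_of_dvd hm),
        Nat.div_div_self hm (NeZero.ne n)]
    have := (isEqDiffCoset_iff _ (hγ ▸ hco.coprime_dvd_right hm)).mp (h _)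
    rwa [hγ] at this
  · intro h γ
    exact (isEqDiffCoset_iff γ (hco.coprime_dvd_right (hord γ))).mpr (h _ (hord γ))

end Cosets

/-- For a prime power `q` coprime to `n`, all `q`-cyclotomic cosets modulo `n` are
equal-difference iff `rad(n) ∣ q - 1` and, in case `8 ∣ n`, `q ≡ 1 (mod 4)`. -/
theorem all_eq_diff_iff (n q : ℕ) (hn : 0 < n) (hq : ∃ p k : ℕ, p.Prime ∧ 0 < k ∧ q = p ^ k)
    (hco : Nat.Coprime q n) :
    (∀ γ : ZMod n, IsEqDiffCoset n q γ) ↔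
      (rad n ∣ q - 1 ∧ (8 ∣ n → q % 4 = 1)) := by
  have : NeZero n := ⟨hn.ne'⟩
  have hq1 : 1 ≤ q := by
    obtain ⟨p, k, hp, -, rfl⟩ := hq
    exact Nat.one_le_pow _ _ hp.pos
  have hsub (p : ℕ) : p ∣ q - 1 ↔ (p : ℤ) ∣ (q : ℤ) - 1 := by
    rw [← Int.natCast_dvd_natCast, Nat.cast_sub hq1, Nat.cast_one]
  have hmod4 : q % 4 = 1 ↔ (4 : ℤ) ∣ (q : ℤ) - 1 := by omega
  rw [forall_isEqDiffCoset_iff hco, rad_dvd_iff]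
  constructor
  · intro h
    refine ⟨fun p hp => ?_, fun h8 => ?_⟩
    · have : Fact p.Prime := ⟨Nat.prime_of_mem_primeFactors hp⟩
      have hpn := Nat.dvd_of_mem_primeFactors hp
      have hpq : ¬p ∣ q := (Nat.Prime.coprime_iff_not_dvd this.out).mp
        (hco.symm.coprime_dvd_left hpn)
      exact (hsub p).mpr (prime_dvd_sub_one_of_dvd_sub_one_mul_orderOf hpq (h p hpn).2)
    · have hodd : Odd q :=
        Nat.coprime_two_right.mp (hco.coprime_dvd_right ((by norm_num : 2 ∣ 8).trans h8))
      exact hmod4.mpr (four_dvd_sub_one_of_eight_dvd_sub_one_mul_orderOf hodd (h 8 h8).2)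
  · rintro ⟨hrad, h8⟩ m hm
    refine (orderOf_natCast_dvd_and_dvd_sub_one_mul_orderOf (fun p hp hpm => ?_)
      fun h => hmod4.mp (h8 (h.trans hm))).imp_left (·.trans hm)
    exact (hsub p).mp (hrad p (Nat.mem_primeFactors.mpr ⟨hp, hpm.trans hm, hn.ne'⟩))
end

section
/- Let q be coprime to n and γ ∈ ℤ/nℤ. Set m = gcd(γ, n), γ̃ = γ/m, n_γ = n/m. Then the q-cyclotomic coset c(γ) modulo n is equal-difference if and only if the q-cyclotomic coset of γ̃ modulo n_γ is equal-difference. -/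
/-! Write `γ = m γ̃` with `m = gcd(γ, n)`. Multiplication by `m` embeds `ℤ/(n/m)ℤ` into `ℤ/nℤ`
and sends `γ̃` to `γ`, the coset of `γ̃` onto the coset of `γ`, and, when `τ ∣ n/m`, the
progression of step `(n/m)/τ` through `γ̃` onto the progression of step `n/τ` through `γ`; being
injective, it also preserves coset sizes. What remains is that an equal-difference coset of `γ`
has `τ ∣ n/m`: the coset lies in `mℤ/nℤ`, hence so does its step `n/τ`, i.e. `mτ ∣ n`. -/

section Dilate

variable {n m : ℕ}

/-- The embedding `x ↦ m x` of `ℤ/(n/m)ℤ` into `ℤ/nℤ`, for `m ∣ n`. -/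
def dilate (n m : ℕ) (x : ZMod (n / m)) : ZMod n := ((m * x.val : ℕ) : ZMod n)

lemma dilate_natCast (h : m ∣ n) (a : ℕ) : dilate n m a = ((m * a : ℕ) : ZMod n) := by
  have hsplit : m * a = n * (a / (n / m)) + m * (a % (n / m)) := by
    obtain ⟨k, rfl⟩ := h
    rcases Nat.eq_zero_or_pos m with rfl | hm
    · simp
    rw [Nat.mul_div_cancel_left k hm]
    nth_rw 1 [← Nat.div_add_mod a k]
    ring
  rw [dilate, ZMod.val_natCast, hsplit]
  push_cast [ZMod.natCast_self]
  ring

lemma neZero_div_of_dvd (hn : 0 < n) (h : m ∣ n) : NeZero (n / m) :=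
  ⟨(Nat.div_pos (Nat.le_of_dvd hn h) (Nat.pos_of_dvd_of_pos h hn)).ne'⟩

lemma dilate_add_natCast (hn : 0 < n) (h : m ∣ n) (x : ZMod (n / m)) (a : ℕ) :
    dilate n m (x + a) = dilate n m x + ((m * a : ℕ) : ZMod n) := by
  have := neZero_div_of_dvd hn h
  rw [← ZMod.natCast_zmod_val x, ← Nat.cast_add, dilate_natCast h, dilate_natCast h]
  push_cast
  ring

lemma dilate_mul_natCast (hn : 0 < n) (h : m ∣ n) (x : ZMod (n / m)) (c : ℕ) :
    dilate n m (x * c) = dilate n m x * c := by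
  have := neZero_div_of_dvd hn h
  rw [← ZMod.natCast_zmod_val x, ← Nat.cast_mul, dilate_natCast h, dilate_natCast h]
  push_cast
  ring

lemma dilate_injective (hn : 0 < n) (h : m ∣ n) : Function.Injective (dilate n m) := by
  have := neZero_div_of_dvd hn h
  intro x y hxy
  have hmod : m * x.val ≡ m * y.val [MOD m * (n / m)] := by
    rw [Nat.mul_div_cancel' h, ← ZMod.natCast_eq_natCast_iff]
    exact hxy
  rw [← ZMod.natCast_zmod_val x, ← ZMod.natCast_zmod_val y, ZMod.natCast_eq_natCast_iff]
  exact Nat.ModEq.mul_left_cancel' (Nat.pos_of_dvd_of_pos h hn).ne' hmod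

lemma castHom_dilate (h : m ∣ n) (x : ZMod (n / m)) :
    ZMod.castHom h (ZMod m) (dilate n m x) = 0 := by
  rw [ZMod.castHom_apply, dilate, ZMod.cast_natCast h, ZMod.natCast_eq_zero_iff]
  exact dvd_mul_right m _

lemma dilate_div_gcd (hn : 0 < n) (γ : ZMod n) :
    dilate n (γ.val.gcd n) ((γ.val / γ.val.gcd n : ℕ) : ZMod (n / γ.val.gcd n)) = γ := by
  rw [dilate_natCast (Nat.gcd_dvd_right _ _), Nat.mul_div_cancel' (Nat.gcd_dvd_left _ _)]
  have : NeZero n := ⟨hn.ne'⟩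
  exact ZMod.natCast_zmod_val γ

lemma dilate_mul_pow (hn : 0 < n) (h : m ∣ n) (x : ZMod (n / m)) (c j : ℕ) :
    dilate n m (x * (c : ZMod (n / m)) ^ j) = dilate n m x * (c : ZMod n) ^ j := by
  exact_mod_cast dilate_mul_natCast hn h x (c ^ j)

lemma coset_dilate (hn : 0 < n) (h : m ∣ n) (q : ℕ) (δ : ZMod (n / m)) :
    coset n q (dilate n m δ) = dilate n m '' coset (n / m) q δ := by
  ext x
  constructor
  · rintro ⟨j, rfl⟩
    exact ⟨_, ⟨j, rfl⟩, dilate_mul_pow hn h δ q j⟩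
  · rintro ⟨_, ⟨j, rfl⟩, rfl⟩
    exact ⟨j, dilate_mul_pow hn h δ q j⟩

lemma progression_dilate (hn : 0 < n) (h : m ∣ n) (δ : ZMod (n / m)) {τ : ℕ}
    (hτ : τ ∣ n / m) :
    progression n (dilate n m δ) τ = dilate n m '' progression (n / m) δ τ := by
  have hstep : ∀ k : ℕ, m * (k * (n / m / τ)) = k * (n / τ) := fun k => by
    rw [← Nat.mul_div_cancel' h, Nat.mul_div_assoc m hτ, Nat.mul_div_cancel' h]
    ring
  have key : ∀ k : ℕ, dilate n m (δ + ((k * (n / m / τ) : ℕ) : ZMod (n / m)))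
      = dilate n m δ + ((k * (n / τ) : ℕ) : ZMod n) := fun k => by
    rw [dilate_add_natCast hn h, hstep]
  ext x
  constructor
  · rintro ⟨k, hk, rfl⟩
    exact ⟨_, ⟨k, hk, rfl⟩, key k⟩
  · rintro ⟨_, ⟨k, hk, rfl⟩, rfl⟩
    exact ⟨k, hk, key k⟩

lemma cosetSize_dilate_iff (hn : 0 < n) (h : m ∣ n) (q : ℕ) (δ : ZMod (n / m)) (τ : ℕ) :
    cosetSize n q (dilate n m δ) τ ↔ cosetSize (n / m) q δ τ := by
  have hfix : ∀ t : ℕ, dilate n m δ * (q : ZMod n) ^ t = dilate n m δ ↔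
      δ * (q : ZMod (n / m)) ^ t = δ := fun t => by
    rw [← dilate_mul_pow hn h]
    exact (dilate_injective hn h).eq_iff
  simp only [cosetSize, hfix]

lemma dvd_div_of_coset_eq_progression (h : m ∣ n) {q τ : ℕ} {δ : ZMod (n / m)}
    (hτ : τ ∣ n) (hset : coset n q (dilate n m δ) = progression n (dilate n m δ) τ) :
    τ ∣ n / m := by
  rcases lt_or_ge τ 2 with hτ2 | hτ2
  · interval_cases τ
    · rw [Nat.eq_zero_of_zero_dvd hτ, Nat.zero_div]
    · exact one_dvd _
  obtain ⟨j, hj⟩ : dilate n m δ + ((1 * (n / τ) : ℕ) : ZMod n) ∈ coset n q (dilate n m δ) :=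
    hset ▸ ⟨1, hτ2, rfl⟩
  have hdvd : m ∣ n / τ := by
    have := congrArg (ZMod.castHom h (ZMod m)) hj
    simp only [map_add, map_mul, map_natCast, castHom_dilate, zero_add, zero_mul,
      one_mul] at this
    exact (ZMod.natCast_eq_zero_iff _ _).1 this
  exact Nat.dvd_div_of_mul_dvd (mul_comm τ m ▸ Nat.mul_dvd_of_dvd_div hτ hdvd)

theorem isEqDiffCoset_dilate_iff (hn : 0 < n) (h : m ∣ n) (q : ℕ) (δ : ZMod (n / m)) :
    IsEqDiffCoset n q (dilate n m δ) ↔ IsEqDiffCoset (n / m) q δ := by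
  constructor
  · rintro ⟨τ, hsize, hτn, hset⟩
    have hτ := dvd_div_of_coset_eq_progression h hτn hset
    refine ⟨τ, (cosetSize_dilate_iff hn h q δ τ).1 hsize, hτ, ?_⟩
    apply Set.image_injective.2 (dilate_injective hn h)
    rw [← coset_dilate hn h, ← progression_dilate hn h δ hτ, hset]
  · rintro ⟨τ, hsize, hτ, hset⟩
    refine ⟨τ, (cosetSize_dilate_iff hn h q δ τ).2 hsize, hτ.trans (Nat.div_dvd_of_dvd h), ?_⟩
    rw [coset_dilate hn h, progression_dilate hn h δ hτ, hset]

end Dilate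

theorem eq_diff_iff_primitive_form_general (n q : ℕ) (hn : 0 < n) (γ : ZMod n) :
    IsEqDiffCoset n q γ ↔
      IsEqDiffCoset (n / Nat.gcd γ.val n) q
        ((γ.val / Nat.gcd γ.val n : ℕ) : ZMod (n / Nat.gcd γ.val n)) := by
  have h := isEqDiffCoset_dilate_iff hn (Nat.gcd_dvd_right γ.val n) q
    ((γ.val / Nat.gcd γ.val n : ℕ) : ZMod (n / Nat.gcd γ.val n))
  rwa [dilate_div_gcd hn] at h

/-- The coset `c_{n/q}(γ)` is equal-difference iff its primitive form
`c_{n_γ/q}(γ̃)`, with `γ̃ = γ/m`, `n_γ = n/m`, `m = gcd(γ, n)`, is equal-difference. -/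
theorem eq_diff_iff_primitive_form (n q : ℕ) (hn : 0 < n) (hq : 0 < q)
    (hco : Nat.Coprime q n) (γ : ZMod n) :
    IsEqDiffCoset n q γ ↔
      IsEqDiffCoset (n / Nat.gcd γ.val n) q
        ((γ.val / Nat.gcd γ.val n : ℕ) : ZMod (n / Nat.gcd γ.val n)) :=
  eq_diff_iff_primitive_form_general n q hn γ
end

section
/- Let q be coprime to n, and let E be an equal-difference subset of the q-cyclotomic coset c(γ) modulo n with |E| = τ_E, containing γ. Then E equals the q^t-cyclotomic coset of γ modulo n, where t is the smallest positive integer such that γ q^t ≡ γ (mod n/τ_E). -/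
/-! Reduction modulo `n/τ_E` turns the progression `E` into the fibre over the image of `γ`.
The exponents `j` with `γ q^j` in that fibre are the periods of `x ↦ x q` at that image, i.e. the
multiples of its minimal period `t`; as `E ⊆ c(γ)`, this makes `E = {γ q^{tk}}`. -/

theorem Function.minimalPeriod_eq_of_isLeast {α : Type*} {f : α → α} {x : α} {t : ℕ}
    (ht : IsLeast {s | 0 < s ∧ Function.IsPeriodicPt f s x} t) :
    Function.minimalPeriod f x = t :=
  le_antisymm (ht.1.2.minimalPeriod_le ht.1.1)
    (ht.2 ⟨ht.1.2.minimalPeriod_pos ht.1.1, Function.isPeriodicPt_minimalPeriod f x⟩)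

theorem mul_pow_eq_self_iff_dvd_of_isLeast {M : Type*} [Monoid M] {g u : M} {t : ℕ}
    (ht : IsLeast {s | 0 < s ∧ g * u ^ s = g} t) (j : ℕ) : g * u ^ j = g ↔ t ∣ j := by
  have hper : ∀ s, Function.IsPeriodicPt (· * u) s g ↔ g * u ^ s = g := fun s => by
    rw [Function.IsPeriodicPt, Function.IsFixedPt, mul_right_iterate]
  simp only [← hper] at ht ⊢
  rw [Function.isPeriodicPt_iff_minimalPeriod_dvd, Function.minimalPeriod_eq_of_isLeast ht]

theorem ZMod.castHom_eq_zero_iff_dvd_val {m n : ℕ} [NeZero n] (h : m ∣ n) (x : ZMod n) :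
    ZMod.castHom h (ZMod m) x = 0 ↔ m ∣ x.val := by
  rw [ZMod.castHom_apply, ZMod.cast_eq_val, ZMod.natCast_eq_zero_iff]

theorem mem_progression_iff_castHom_eq {n τ : ℕ} [NeZero n] (hτ : τ ∣ n) (γ x : ZMod n) :
    x ∈ progression n γ τ ↔
      ZMod.castHom (Nat.div_dvd_of_dvd hτ) (ZMod (n / τ)) x =
        ZMod.castHom (Nat.div_dvd_of_dvd hτ) (ZMod (n / τ)) γ := by
  rw [← sub_eq_zero, ← map_sub]
  constructor
  · rintro ⟨k, -, rfl⟩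
    rw [add_sub_cancel_left, map_natCast, ZMod.natCast_eq_zero_iff]
    exact dvd_mul_left _ _
  · rw [ZMod.castHom_eq_zero_iff_dvd_val]
    rintro ⟨k, hk⟩
    have hkτ : k < τ := by
      refine Nat.lt_of_mul_lt_mul_left (a := n / τ) ?_
      rw [← hk, Nat.div_mul_cancel hτ]
      exact ZMod.val_lt (x - γ)
    refine ⟨k, hkτ, ?_⟩
    rw [mul_comm, ← hk, ZMod.natCast_zmod_val, add_sub_cancel]

theorem eq_diff_subset_is_coset_general (n q τE t : ℕ) (hn : 0 < n)
    (γ : ZMod n) (E : Set (ZMod n))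
    (hdvd : τE ∣ n) (hE : E = progression n γ τE) (hsub : E ⊆ coset n q γ)
    (ht : IsLeast {s : ℕ | 0 < s ∧
      ZMod.castHom (Nat.div_dvd_of_dvd hdvd) (ZMod (n / τE)) (γ * (q : ZMod n) ^ s) =
        ZMod.castHom (Nat.div_dvd_of_dvd hdvd) (ZMod (n / τE)) γ} t) :
    E = coset n (q ^ t) γ := by
  have : NeZero n := ⟨hn.ne'⟩
  set f := ZMod.castHom (Nat.div_dvd_of_dvd hdvd) (ZMod (n / τE))
  simp only [map_mul, map_pow] at ht
  have hperiod : ∀ j, f (γ * (q : ZMod n) ^ j) = f γ ↔ t ∣ j := fun j => by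
    rw [map_mul, map_pow]
    exact mul_pow_eq_self_iff_dvd_of_isLeast ht j
  subst hE
  ext x
  constructor
  · intro hx
    obtain ⟨j, rfl⟩ := hsub hx
    obtain ⟨k, rfl⟩ := (hperiod j).1 ((mem_progression_iff_castHom_eq hdvd γ _).1 hx)
    exact ⟨k, by push_cast; rw [pow_mul]⟩
  · rintro ⟨k, rfl⟩
    rw [mem_progression_iff_castHom_eq hdvd, Nat.cast_pow, ← pow_mul]
    exact (hperiod _).2 (dvd_mul_right t k)

/-- An equal-difference subset `E` of `c_{n/q}(γ)` containing `γ`, of size `τ_E`, equals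
the `q^t`-cyclotomic coset of `γ`, where `t` is the least positive integer with
`γ q^t ≡ γ (mod n/τ_E)`. -/
theorem eq_diff_subset_is_coset (n q τE t : ℕ) (hn : 0 < n) (hq : 0 < q)
    (hco : Nat.Coprime q n) (γ : ZMod n) (E : Set (ZMod n))
    (hdvd : τE ∣ n) (hE : E = progression n γ τE) (hsub : E ⊆ coset n q γ)
    (ht : IsLeast {s : ℕ | 0 < s ∧
      ZMod.castHom (Nat.div_dvd_of_dvd hdvd) (ZMod (n / τE)) (γ * (q : ZMod n) ^ s) =
        ZMod.castHom (Nat.div_dvd_of_dvd hdvd) (ZMod (n / τE)) γ} t) :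
    E = coset n (q ^ t) γ :=
  eq_diff_subset_is_coset_general n q τE t hn γ E hdvd hE hsub ht
end

section
/- Let q be a prime power coprime to n and γ ∈ ℤ/nℤ with n_γ = n/gcd(γ,n). Define ω_γ = 2·ord_{rad(n_γ)}(q) if q^{ord_{rad(n_γ)}(q)} ≡ 3 (mod 4) and 8 ∣ n_γ, and ω_γ = ord_{rad(n_γ)}(q) otherwise. Then the decomposition of c_{n/q}(γ) into the q^{ω_γ}-cyclotomic cosets of γ q^j, j = 0, …, ω_γ − 1, is an equal-difference decomposition, and it is the unique coarsest equal-difference decomposition of c_{n/q}(γ). -/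
/-- `ω_γ`: twice the order of `q` modulo `rad(n_γ)` if `q^(ord) ≡ 3 (mod 4)` and
`8 ∣ n_γ`, and the order itself otherwise. -/
noncomputable def omegaGamma (n q : ℕ) (γ : ZMod n) : ℕ :=
  if q ^ orderOf (q : ZMod (rad (n / Nat.gcd γ.val n))) % 4 = 3 ∧ 8 ∣ n / Nat.gcd γ.val n
  then 2 * orderOf (q : ZMod (rad (n / Nat.gcd γ.val n)))
  else orderOf (q : ZMod (rad (n / Nat.gcd γ.val n)))

/-- `E` is an equal-difference subset of `ℤ/nℤ`: an arithmetic progression of some size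
`μ ∣ n` with common difference `n/μ`. -/
def EqDiffSubset (n : ℕ) (E : Set (ZMod n)) : Prop :=
  ∃ δ : ZMod n, ∃ μ : ℕ, 0 < μ ∧ μ ∣ n ∧ E = progression n δ μ

/-- `P` is an equal-difference decomposition of `c_{n/q}(γ)`: a partition of the coset
into nonempty pairwise disjoint equal-difference subsets. -/
def IsEqDiffDecomp (n q : ℕ) (γ : ZMod n) (P : Set (Set (ZMod n))) : Prop :=
  (∀ E ∈ P, EqDiffSubset n E) ∧ (⋃₀ P = coset n q γ) ∧
    P.PairwiseDisjoint id ∧ ∅ ∉ P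

/-- `P₁` is coarser than `P₂`: every part of `P₂` is contained in a part of `P₁`
(so each part of `P₁` is a union of parts of `P₂`). -/
def Coarser (n : ℕ) (P₁ P₂ : Set (Set (ZMod n))) : Prop :=
  ∀ E ∈ P₂, ∃ F ∈ P₁, E ⊆ F

/-!
Write `γ = d * w` with `d = gcd(γ, n)`: then `m = n / d` is `n_γ`, `w` is a unit modulo `m`, and
`c_{n/q}(γ)` is `d` times the `q`-orbit of `w` modulo `m`.

Put `s = q ^ ω_γ`. Then `s ≡ 1` modulo `rad m`, and modulo `4` when `8 ∣ m`, so lifting the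
exponent shows that the order of `s` modulo `m` is a multiple of `τ = m / g`, `g = gcd(s - 1, m)`.
As `s ≡ 1 (mod g)`, the orbit `x⟨s⟩` of a unit `x` lies in the `τ`-term progression `x + gℤ`, and
having at least `τ` elements it fills it: the `q ^ ω_γ`-cyclotomic cosets are equal-difference.

Conversely, if a progression `x + eℤ` lies in the `q`-orbit of `w`, all its terms are units, which
forces `rad m ∣ e`; when `8 ∣ m` also `4 ∣ e`, since modulo `8` the orbit only meets `w` and `w q`.
So `x + k e ≡ w q ^ b` with `x = w q ^ j` gives `q ^ j ≡ q ^ b` modulo `rad m` (and modulo `4`),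
that is `j ≡ b (mod ω_γ)`, and every equal-difference part lies in a single `q ^ ω_γ`-coset.
-/

lemma rad_dvd_self (m : ℕ) : rad m ∣ m := Nat.prod_primeFactors_dvd m

lemma rad_ne_zero {m : ℕ} (hm : m ≠ 0) : rad m ≠ 0 := ne_zero_of_dvd_ne_zero hm (rad_dvd_self m)

lemma prime_dvd_rad {p m : ℕ} (hp : p.Prime) (hpm : p ∣ m) (hm : m ≠ 0) : p ∣ rad m :=
  Finset.dvd_prod_of_mem _ (Nat.mem_primeFactors.2 ⟨hp, hpm, hm⟩)

lemma rad_dvd_of_forall_prime_dvd {m e : ℕ} (h : ∀ p, p.Prime → p ∣ m → p ∣ e) : rad m ∣ e :=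
  Finset.prod_primes_dvd e (fun _ hp => (Nat.prime_of_mem_primeFactors hp).prime)
    fun p hp => h p (Nat.prime_of_mem_primeFactors hp) (Nat.dvd_of_mem_primeFactors hp)

lemma Nat.Coprime.of_coprime_rad {s m : ℕ} (hm : m ≠ 0) (h : s.Coprime (rad m)) : s.Coprime m :=
  Nat.coprime_of_dvd fun _ hp hps hpm =>
    hp.one_lt.ne' (Nat.Coprime.eq_one_of_dvd (Nat.Coprime.coprime_dvd_left hps h)
      (prime_dvd_rad hp hpm hm))

lemma pow_modEq_pow_mod_two {q M : ℕ} (hq : q ^ 2 ≡ 1 [MOD M]) (b : ℕ) :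
    q ^ b ≡ q ^ (b % 2) [MOD M] := by
  conv_lhs => rw [← Nat.mod_add_div b 2, pow_add, pow_mul]
  simpa using (hq.pow (b / 2)).mul_left (q ^ (b % 2))

lemma sq_modEq_one_eight {q : ℕ} (hq : Odd q) : q ^ 2 ≡ 1 [MOD 8] :=
  ((Nat.modEq_iff_dvd' (Nat.one_le_pow _ _ hq.pos)).2 (Nat.eight_dvd_sq_sub_one_of_odd hq)).symm

lemma modEq_two_of_pow_modEq_four {q a b : ℕ} (hq : q % 4 = 3) (h : q ^ a ≡ q ^ b [MOD 4]) :
    a ≡ b [MOD 2] := by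
  have hq2 : q ^ 2 ≡ 1 [MOD 4] :=
    (sq_modEq_one_eight (Nat.odd_iff.2 (by omega))).of_dvd (by norm_num)
  have h' := ((pow_modEq_pow_mod_two hq2 a).symm.trans h).trans (pow_modEq_pow_mod_two hq2 b)
  unfold Nat.ModEq at h' ⊢
  rcases Nat.mod_two_eq_zero_or_one a with ha | ha <;>
    rcases Nat.mod_two_eq_zero_or_one b with hb | hb <;> simp [ha, hb] at h' <;> omega

lemma odd_and_mod_four_of_pow_mod_four {q t : ℕ} (hq : Odd q) (h : q ^ t % 4 = 3) :
    Odd t ∧ q % 4 = 3 := by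
  have h' := pow_modEq_pow_mod_two ((sq_modEq_one_eight hq).of_dvd (by norm_num : 4 ∣ 8)) t
  unfold Nat.ModEq at h'
  rcases Nat.mod_two_eq_zero_or_one t with ht | ht
  · simp [ht] at h'; omega
  · rw [ht, pow_one] at h'
    exact ⟨Nat.odd_iff.2 ht, by omega⟩

lemma padicValNat_pow_sub_one {p s t : ℕ} [hp : Fact p.Prime] (hs : 1 < s) (hps : p ∣ s - 1)
    (h2 : p ≠ 2 ∨ 4 ∣ s - 1) (ht : t ≠ 0) :
    padicValNat p (s ^ t - 1) = padicValNat p (s - 1) + padicValNat p t := by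
  have hns : ¬p ∣ s := fun h => hp.out.one_lt.ne' (Nat.dvd_one.1 <| by
    simpa [Nat.sub_sub_self hs.le] using Nat.dvd_sub h hps)
  rcases eq_or_ne p 2 with rfl | hodd
  · have h4 := h2.resolve_left (by decide)
    rw [← Nat.cast_inj (R := ℕ∞), Nat.cast_add,
      padicValNat_eq_emultiplicity (Nat.sub_ne_zero_of_lt (Nat.one_lt_pow ht hs)),
      padicValNat_eq_emultiplicity (Nat.sub_ne_zero_of_lt hs), padicValNat_eq_emultiplicity ht,
      ← Int.natCast_emultiplicity, ← Int.natCast_emultiplicity, ← Int.natCast_emultiplicity]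
    push_cast [Nat.one_le_pow _ _ (by omega : 0 < s), hs.le]
    have h4' : (4 : ℤ) ∣ (s : ℤ) - 1 := by
      have := Int.natCast_dvd_natCast.2 h4
      push_cast [hs.le] at this
      exact this
    simpa using Int.two_pow_sub_pow' (y := 1) t h4' (by exact_mod_cast hns)
  · simpa using padicValNat.pow_sub_pow (hp.out.odd_of_ne_two hodd) hs hps hns ht

lemma pow_dvd_gcd_mul_of_pow_dvd_pow_sub_one {p k m s t : ℕ} (hp : p.Prime) (hs : 1 < s)
    (ht : t ≠ 0) (hps : p ∣ s - 1) (h2 : p ≠ 2 ∨ 4 ∣ s - 1) (hkm : p ^ k ∣ m)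
    (hkst : p ^ k ∣ s ^ t - 1) : p ^ k ∣ Nat.gcd (s - 1) m * t := by
  have := Fact.mk hp
  set β := padicValNat p (s - 1)
  rcases le_or_gt k β with hkβ | hβk
  · exact (Nat.dvd_gcd ((pow_dvd_pow p hkβ).trans pow_padicValNat_dvd) hkm).trans
      (dvd_mul_right _ _)
  have hle : k ≤ β + padicValNat p t := by
    rw [← padicValNat_pow_sub_one hs hps h2 ht]
    exact (padicValNat_dvd_iff_le (Nat.sub_ne_zero_of_lt (Nat.one_lt_pow ht hs))).1 hkst
  have hβ : p ^ β ∣ Nat.gcd (s - 1) m :=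
    Nat.dvd_gcd pow_padicValNat_dvd ((pow_dvd_pow p hβk.le).trans hkm)
  have htk : p ^ (k - β) ∣ t := (padicValNat_dvd_iff_le ht).2 (by omega)
  calc p ^ k = p ^ β * p ^ (k - β) := by rw [← pow_add]; congr 1; omega
    _ ∣ Nat.gcd (s - 1) m * t := mul_dvd_mul hβ htk

theorem div_gcd_sub_one_dvd_of_pow_modEq_one {m s t : ℕ} (hm : m ≠ 0) (hs : 1 < s)
    (hrad : s ≡ 1 [MOD rad m]) (h8 : 8 ∣ m → s ≡ 1 [MOD 4]) (hst : s ^ t ≡ 1 [MOD m]) :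
    m / Nat.gcd (s - 1) m ∣ t := by
  rcases eq_or_ne t 0 with rfl | ht
  · exact dvd_zero _
  rw [Nat.div_dvd_iff_dvd_mul (Nat.gcd_dvd_right _ _) (Nat.gcd_pos_of_pos_right _ hm.bot_lt),
    Nat.dvd_iff_prime_pow_dvd_dvd]
  intro p k hp hpk
  rcases eq_or_ne k 0 with rfl | hk
  · simp
  have hpm : p ∣ m := (dvd_pow_self p hk).trans hpk
  have hps : p ∣ s - 1 := (Nat.modEq_iff_dvd' hs.le).1 (hrad.symm.of_dvd (prime_dvd_rad hp hpm hm))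
  have hkst : p ^ k ∣ s ^ t - 1 :=
    hpk.trans ((Nat.modEq_iff_dvd' (Nat.one_le_pow _ _ (by omega))).1 hst.symm)
  by_cases h2 : p ≠ 2 ∨ 4 ∣ s - 1
  · exact pow_dvd_gcd_mul_of_pow_dvd_pow_sub_one hp hs ht hps h2 hpk hkst
  -- `s ≡ 3 (mod 4)`: then `8 ∤ m`, and `s ^ t ≡ 1 (mod 4)` forces `t` to be even.
  push Not at h2
  obtain ⟨rfl, h4⟩ := h2
  have hk2 : k ≤ 2 := by
    by_contra! hk3
    exact h4 ((Nat.modEq_iff_dvd' hs.le).1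
      (h8 ((pow_dvd_pow 2 (by omega : 3 ≤ k)).trans hpk)).symm)
  have h2g : 2 ∣ Nat.gcd (s - 1) m := Nat.dvd_gcd hps hpm
  obtain rfl | rfl : k = 1 ∨ k = 2 := by omega
  · simpa using dvd_mul_of_dvd_left h2g t
  · have h2t : t ≡ 0 [MOD 2] :=
      modEq_two_of_pow_modEq_four (q := s) (by omega) (by simpa using hst.of_dvd hpk)
    simpa using mul_dvd_mul h2g (Nat.modEq_zero_iff_dvd.1 h2t)

lemma div_gcd_pos {a m : ℕ} (hm : m ≠ 0) : 0 < m / Nat.gcd a m :=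
  Nat.div_pos (Nat.gcd_le_right _ hm.bot_lt) (Nat.gcd_pos_of_pos_right _ hm.bot_lt)

lemma mul_modEq_mod_div_mul {g m : ℕ} (hg : g ∣ m) (i : ℕ) : i * g ≡ i % (m / g) * g [MOD m] := by
  have := (Nat.mod_modEq i (m / g)).symm.mul_right' g
  rwa [Nat.div_mul_cancel hg] at this

lemma exists_mul_pow_modEq_add_mul_gcd {m s : ℕ} (hm : m ≠ 0) (hs : 0 < s) (x k : ℕ) :
    ∃ i < m / Nat.gcd (s - 1) m, x * s ^ k ≡ x + i * Nat.gcd (s - 1) m [MOD m] := by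
  obtain ⟨c, hc⟩ : Nat.gcd (s - 1) m ∣ s ^ k - 1 := (Nat.gcd_dvd_left _ _).trans
    (by simpa only [one_pow] using Nat.sub_dvd_pow_sub_pow s 1 k)
  refine ⟨x * c % (m / Nat.gcd (s - 1) m), Nat.mod_lt _ (div_gcd_pos hm), ?_⟩
  have hxs : x * s ^ k = x + x * c * Nat.gcd (s - 1) m := by
    have := Nat.one_le_pow k s hs
    rw [show s ^ k = 1 + Nat.gcd (s - 1) m * c by omega]
    ring
  rw [hxs]
  exact (mul_modEq_mod_div_mul (Nat.gcd_dvd_right _ _) _).add_left x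

theorem exists_add_mul_gcd_modEq_mul_pow {m s x : ℕ} (hm : m ≠ 0) (hs : 1 < s)
    (hx : x.Coprime m) (hrad : s ≡ 1 [MOD rad m]) (h8 : 8 ∣ m → s ≡ 1 [MOD 4]) (i : ℕ) :
    ∃ k, x + i * Nat.gcd (s - 1) m ≡ x * s ^ k [MOD m] := by
  classical
  have : NeZero m := ⟨hm⟩
  set g := Nat.gcd (s - 1) m
  set τ := m / g
  have hτ : 0 < τ := div_gcd_pos hm
  have hsm : s.Coprime m := Nat.Coprime.of_coprime_rad hm (by simpa using hrad.gcd_eq)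
  have hsu : IsUnit (s : ZMod m) := (ZMod.isUnit_iff_coprime s m).2 hsm
  have hord : τ ≤ orderOf (s : ZMod m) := Nat.le_of_dvd hsu.isOfFinOrder.orderOf_pos
    (div_gcd_sub_one_dvd_of_pow_modEq_one hm hs hrad h8
      ((ZMod.natCast_eq_natCast_iff _ _ _).1 (by push_cast; exact pow_orderOf_eq_one _)))
  set A := (Finset.range τ).image fun k => ((x * s ^ k : ℕ) : ZMod m)
  set B := (Finset.range τ).image fun i => ((x + i * g : ℕ) : ZMod m)
  -- The `τ` elements of `A` are distinct since `τ ≤ orderOf s`, and lie among the `≤ τ` of `B`.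
  have hAB : A ⊆ B := by
    simp only [A, B, Finset.image_subset_iff, Finset.mem_image, Finset.mem_range]
    intro k _
    obtain ⟨i, hi, h⟩ := exists_mul_pow_modEq_add_mul_gcd hm hs.le x k
    exact ⟨i, hi, ((ZMod.natCast_eq_natCast_iff _ _ _).2 h).symm⟩
  have hA : A.card = τ := by
    rw [Finset.card_image_of_injOn, Finset.card_range]
    intro a ha b hb hab
    simp only [Finset.coe_range, Set.mem_Iio, Nat.cast_mul, Nat.cast_pow] at ha hb hab
    exact pow_injOn_Iio_orderOf (lt_of_lt_of_le ha hord) (lt_of_lt_of_le hb hord)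
      (((ZMod.isUnit_iff_coprime x m).2 hx).mul_left_cancel hab)
  have hAB' : A = B := Finset.eq_of_subset_of_card_le hAB
    (hA ▸ Finset.card_image_le.trans (Finset.card_range τ).le)
  have hi : ((x + i % τ * g : ℕ) : ZMod m) ∈ A :=
    hAB' ▸ Finset.mem_image_of_mem _ (Finset.mem_range.2 (Nat.mod_lt i hτ))
  obtain ⟨k, -, hk⟩ := Finset.mem_image.1 hi
  exact ⟨k, ((mul_modEq_mod_div_mul (Nat.gcd_dvd_right _ _) i).add_left x).trans
    ((ZMod.natCast_eq_natCast_iff _ _ _).1 hk.symm)⟩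

lemma natCast_mul_eq_natCast_mul_iff {n d m x y : ℕ} (hn : n = d * m) (hd : d ≠ 0) :
    ((d * x : ℕ) : ZMod n) = ((d * y : ℕ) : ZMod n) ↔ x ≡ y [MOD m] := by
  rw [ZMod.natCast_eq_natCast_iff, hn, Nat.ModEq.mul_left_cancel_iff' hd]

theorem coset_eq_progression {n d m s x : ℕ} (hn : n = d * m) (hd : d ≠ 0) (hm : m ≠ 0)
    (hs : 1 < s) (hx : x.Coprime m) (hrad : s ≡ 1 [MOD rad m]) (h8 : 8 ∣ m → s ≡ 1 [MOD 4]) :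
    coset n s ((d * x : ℕ) : ZMod n) =
      progression n ((d * x : ℕ) : ZMod n) (m / Nat.gcd (s - 1) m) := by
  set g := Nat.gcd (s - 1) m
  have hstep : n / (m / g) = d * g := by
    refine Nat.div_eq_of_eq_mul_left (div_gcd_pos hm) ?_
    rw [hn, mul_assoc, Nat.mul_div_cancel' (Nat.gcd_dvd_right _ _)]
  have key : ∀ k i, ((d * x : ℕ) : ZMod n) * (s : ZMod n) ^ k =
      ((d * x : ℕ) : ZMod n) + ((i * (d * g) : ℕ) : ZMod n) ↔ x * s ^ k ≡ x + i * g [MOD m] := by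
    intro k i
    rw [← natCast_mul_eq_natCast_mul_iff hn hd]
    push_cast
    ring_nf
  ext y
  simp only [coset, progression, Set.mem_ofPred_eq, hstep]
  constructor
  · rintro ⟨k, rfl⟩
    obtain ⟨i, hi, h⟩ := exists_mul_pow_modEq_add_mul_gcd (s := s) hm (by omega) x k
    exact ⟨i, hi, (key k i).2 h⟩
  · rintro ⟨i, -, rfl⟩
    obtain ⟨k, h⟩ := exists_add_mul_gcd_modEq_mul_pow hm hs hx hrad h8 i
    exact ⟨k, ((key k i).2 h.symm).symm⟩

-- `omegaGamma n q γ` is `cyclotomicExponent (n / Nat.gcd γ.val n) q` by definition.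
noncomputable def cyclotomicExponent (m q : ℕ) : ℕ :=
  if q ^ orderOf (q : ZMod (rad m)) % 4 = 3 ∧ 8 ∣ m then 2 * orderOf (q : ZMod (rad m))
  else orderOf (q : ZMod (rad m))

lemma modEq_orderOf_of_pow_modEq {r q a b : ℕ} [NeZero r] (hq : q.Coprime r)
    (h : q ^ a ≡ q ^ b [MOD r]) : a ≡ b [MOD orderOf (q : ZMod r)] :=
  ((ZMod.isUnit_iff_coprime q r).2 hq).isOfFinOrder.pow_eq_pow_iff_modEq.1
    (by exact_mod_cast (ZMod.natCast_eq_natCast_iff _ _ _).2 h)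

lemma orderOf_dvd_cyclotomicExponent (m q : ℕ) :
    orderOf (q : ZMod (rad m)) ∣ cyclotomicExponent m q := by
  unfold cyclotomicExponent
  split_ifs
  exacts [dvd_mul_left _ _, dvd_rfl]

lemma cyclotomicExponent_pos {m q : ℕ} (hm : m ≠ 0) (hq : q.Coprime m) :
    0 < cyclotomicExponent m q := by
  have : NeZero (rad m) := ⟨rad_ne_zero hm⟩
  have := ((ZMod.isUnit_iff_coprime q (rad m)).2
    (hq.coprime_dvd_right (rad_dvd_self m))).isOfFinOrder.orderOf_pos
  unfold cyclotomicExponent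
  split_ifs <;> omega

lemma pow_cyclotomicExponent_modEq_one_rad (m q : ℕ) :
    q ^ cyclotomicExponent m q ≡ 1 [MOD rad m] := by
  rw [← ZMod.natCast_eq_natCast_iff]
  push_cast
  exact orderOf_dvd_iff_pow_eq_one.1 (orderOf_dvd_cyclotomicExponent m q)

lemma pow_cyclotomicExponent_modEq_one_four {m q : ℕ} (hq : q.Coprime m) (h8 : 8 ∣ m) :
    q ^ cyclotomicExponent m q ≡ 1 [MOD 4] := by
  have hq8 : Odd q :=
    Nat.coprime_two_right.1 (hq.coprime_dvd_right ((by norm_num : 2 ∣ 8).trans h8))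
  unfold cyclotomicExponent
  split_ifs with h
  · rw [pow_mul]
    simpa using ((sq_modEq_one_eight hq8).of_dvd (by norm_num : 4 ∣ 8)).pow _
  · have := Nat.odd_iff.1 (hq8.pow (n := orderOf (q : ZMod (rad m))))
    unfold Nat.ModEq
    omega

lemma prime_dvd_of_forall_coprime_add_mul {p m x e : ℕ} (hp : p.Prime) (hpm : p ∣ m)
    (h : ∀ K, (x + K * e).Coprime m) : p ∣ e := by
  have := Fact.mk hp
  by_contra hpe
  have he : (e : ZMod p) ≠ 0 := by rwa [Ne, ZMod.natCast_eq_zero_iff]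
  set K := (-(x : ZMod p) / e).val
  have hK : p ∣ x + K * e := by
    rw [← ZMod.natCast_eq_zero_iff]
    push_cast
    rw [ZMod.natCast_zmod_val, div_mul_cancel₀ _ he, add_neg_cancel]
  exact hp.one_lt.ne' (Nat.Coprime.eq_one_of_dvd (Nat.Coprime.coprime_dvd_left hK (h K)) hpm)

lemma pow_modEq_pow_of_add_mul_modEq {M m w q j b K e : ℕ} (hM : M ∣ m) (hMe : M ∣ e)
    (hw : w.Coprime M) (h : w * q ^ j + K * e ≡ w * q ^ b [MOD m]) : q ^ j ≡ q ^ b [MOD M] := by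
  have hKe : w * q ^ j + K * e ≡ w * q ^ j [MOD M] := by
    simpa using (Nat.modEq_zero_iff_dvd.2 (dvd_mul_of_dvd_right hMe K)).add_left (w * q ^ j)
  exact Nat.ModEq.cancel_left_of_coprime (Nat.coprime_comm.1 hw) (hKe.symm.trans (h.of_dvd hM))

-- Modulo 8 the `q`-orbit of `w` is `{w, w q}`, too small to contain `x, x + e, x + 2e` when
-- `e ≡ 2 (mod 4)`.
lemma four_dvd_of_forall_add_mul_modEq {m q w x e : ℕ} (h8 : 8 ∣ m) (hq : Odd q) (he : 2 ∣ e)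
    (h : ∀ K, ∃ b, x + K * e ≡ w * q ^ b [MOD m]) : 4 ∣ e := by
  have hK : ∀ K, (x + K * e) % 8 = w % 8 ∨ (x + K * e) % 8 = w * q % 8 := by
    intro K
    obtain ⟨b, hb⟩ := h K
    have := (hb.of_dvd h8).trans ((pow_modEq_pow_mod_two (sq_modEq_one_eight hq) b).mul_left w)
    unfold Nat.ModEq at this
    rcases Nat.mod_two_eq_zero_or_one b with hb2 | hb2 <;> simp [hb2] at this <;> omega
  have h0 := hK 0
  have h1 := hK 1
  have h2 := hK 2
  omega

theorem modEq_cyclotomicExponent {m q w j e K b : ℕ} (hm : m ≠ 0) (hq : q.Coprime m)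
    (hw : w.Coprime m) (hall : ∀ K, ∃ b, w * q ^ j + K * e ≡ w * q ^ b [MOD m])
    (hb : w * q ^ j + K * e ≡ w * q ^ b [MOD m]) : j ≡ b [MOD cyclotomicExponent m q] := by
  have : NeZero (rad m) := ⟨rad_ne_zero hm⟩
  have hcop : ∀ K, (w * q ^ j + K * e).Coprime m := fun K => by
    obtain ⟨b', hb'⟩ := hall K
    exact hb'.gcd_eq.trans (Nat.Coprime.mul_left hw (hq.pow_left b'))
  have hrad : rad m ∣ e := rad_dvd_of_forall_prime_dvd fun p hp hpm =>
    prime_dvd_of_forall_coprime_add_mul hp hpm hcop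
  have ht : j ≡ b [MOD orderOf (q : ZMod (rad m))] :=
    modEq_orderOf_of_pow_modEq (hq.coprime_dvd_right (rad_dvd_self m))
      (pow_modEq_pow_of_add_mul_modEq (rad_dvd_self m) hrad
        (hw.coprime_dvd_right (rad_dvd_self m)) hb)
  unfold cyclotomicExponent
  split_ifs with h
  · obtain ⟨h3, h8⟩ := h
    have h2m : 2 ∣ m := (by norm_num : 2 ∣ 8).trans h8
    have h4m : 4 ∣ m := (by norm_num : 4 ∣ 8).trans h8
    have hq2 : Odd q := Nat.coprime_two_right.1 (hq.coprime_dvd_right h2m)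
    obtain ⟨htodd, hq4⟩ := odd_and_mod_four_of_pow_mod_four hq2 h3
    have h4e : 4 ∣ e := four_dvd_of_forall_add_mul_modEq h8 hq2
      ((prime_dvd_rad Nat.prime_two h2m hm).trans hrad) hall
    have hj2 : j ≡ b [MOD 2] := modEq_two_of_pow_modEq_four hq4
      (pow_modEq_pow_of_add_mul_modEq h4m h4e (hw.coprime_dvd_right h4m) hb)
    rw [mul_comm]
    exact (Nat.modEq_and_modEq_iff_modEq_mul (Nat.coprime_two_right.2 htodd)).1 ⟨ht, hj2⟩
  · exact ht

lemma IsOfFinOrder.exists_pow_eq_mul_pow_pow {M : Type*} [Monoid M] {u : M} (hu : IsOfFinOrder u)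
    {a b k : ℕ} (h : a ≡ b [MOD k]) : ∃ c, u ^ a = u ^ b * (u ^ k) ^ c := by
  rcases Nat.eq_zero_or_pos k with rfl | hk
  · exact ⟨0, by simp [Nat.modEq_zero_iff.1 h]⟩
  set N := a + k * (orderOf u * b)
  have hbN : b ≤ N := le_add_left ((Nat.le_mul_of_pos_left b hu.orderOf_pos).trans
    (Nat.le_mul_of_pos_left _ hk))
  obtain ⟨c, hc⟩ := (Nat.modEq_iff_dvd' hbN).1 (h.symm.trans (Nat.add_mul_mod_self_left a k _).symm)
  refine ⟨c, ?_⟩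
  calc u ^ a = u ^ N := by simp [N, pow_add, pow_mul, mul_left_comm k, pow_orderOf_eq_one]
    _ = u ^ b * (u ^ k) ^ c := by rw [← pow_mul, ← pow_add, ← hc, Nat.add_sub_cancel' hbN]

lemma mem_coset_self (n Q : ℕ) (δ : ZMod n) : δ ∈ coset n Q δ := ⟨0, by simp⟩

lemma mul_pow_mem_coset_pow_mod (n q k J : ℕ) (γ : ZMod n) :
    γ * (q : ZMod n) ^ J ∈ coset n (q ^ k) (γ * (q : ZMod n) ^ (J % k)) :=
  ⟨J / k, by push_cast; rw [mul_assoc, ← pow_mul, ← pow_add, Nat.mod_add_div]⟩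

lemma coset_subset_of_mem {n Q : ℕ} {δ x : ZMod n} (hx : x ∈ coset n Q δ) :
    coset n Q x ⊆ coset n Q δ := by
  obtain ⟨a, rfl⟩ := hx
  rintro _ ⟨b, rfl⟩
  exact ⟨a + b, by rw [pow_add, mul_assoc]⟩

lemma coset_eq_of_mem {n Q : ℕ} (hQ : IsOfFinOrder (Q : ZMod n)) {δ x : ZMod n}
    (hx : x ∈ coset n Q δ) : coset n Q x = coset n Q δ := by
  refine (coset_subset_of_mem hx).antisymm (coset_subset_of_mem ?_)
  obtain ⟨a, rfl⟩ := hx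
  obtain ⟨c, hc⟩ := hQ.exists_pow_eq_mul_pow_pow (Nat.modEq_one : 0 ≡ a [MOD 1])
  rw [pow_one, pow_zero] at hc
  exact ⟨c, by rw [mul_assoc, ← hc, mul_one]⟩

theorem isEqDiffDecomp_cosets_pow {n q ω : ℕ} [NeZero n] (hq : q.Coprime n) (hω : 0 < ω)
    {γ : ZMod n} (h : ∀ j, EqDiffSubset n (coset n (q ^ ω) (γ * (q : ZMod n) ^ j))) :
    IsEqDiffDecomp n q γ {E | ∃ j < ω, E = coset n (q ^ ω) (γ * (q : ZMod n) ^ j)} := by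
  have hfin : IsOfFinOrder ((q ^ ω : ℕ) : ZMod n) :=
    ((ZMod.isUnit_iff_coprime _ n).2 (hq.pow_left ω)).isOfFinOrder
  refine ⟨?_, ?_, ?_, ?_⟩
  · rintro E ⟨j, -, rfl⟩
    exact h j
  · ext x
    simp only [Set.mem_sUnion, Set.mem_ofPred_eq]
    constructor
    · rintro ⟨E, ⟨j, -, rfl⟩, k, rfl⟩
      exact ⟨j + ω * k, by push_cast; ring⟩
    · rintro ⟨J, rfl⟩
      exact ⟨_, ⟨J % ω, Nat.mod_lt J hω, rfl⟩, mul_pow_mem_coset_pow_mod n q ω J γ⟩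
  · rintro _ ⟨i, -, rfl⟩ _ ⟨j, -, rfl⟩ hij
    refine Set.disjoint_left.2 fun x hi hj => hij ?_
    rw [← coset_eq_of_mem hfin hi, coset_eq_of_mem hfin hj]
  · rintro ⟨j, -, hj⟩
    exact (hj ▸ mem_coset_self n _ _ : _ ∈ (∅ : Set (ZMod n)))

theorem coarser_cosets_pow {n q ω : ℕ} (hω : 0 < ω) {γ : ZMod n} {P : Set (Set (ZMod n))}
    (h : ∀ E ∈ P, ∃ δ ∈ coset n q γ, E ⊆ coset n (q ^ ω) δ) :
    Coarser n {E | ∃ j < ω, E = coset n (q ^ ω) (γ * (q : ZMod n) ^ j)} P := by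
  intro E hE
  obtain ⟨_, ⟨J, rfl⟩, hEδ⟩ := h E hE
  exact ⟨_, ⟨J % ω, Nat.mod_lt J hω, rfl⟩,
    hEδ.trans (coset_subset_of_mem (mul_pow_mem_coset_pow_mod n q ω J γ))⟩

lemma mem_of_coarser_of_coarser {n : ℕ} {P₁ P₂ : Set (Set (ZMod n))}
    (hd : P₂.PairwiseDisjoint id) (he : ∅ ∉ P₂) (h₁₂ : Coarser n P₁ P₂) (h₂₁ : Coarser n P₂ P₁)
    {E : Set (ZMod n)} (hE : E ∈ P₂) : E ∈ P₁ := by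
  obtain ⟨F, hF, hEF⟩ := h₁₂ E hE
  obtain ⟨E', hE', hFE'⟩ := h₂₁ F hF
  obtain ⟨x, hx⟩ := Set.nonempty_iff_ne_empty.2 fun h => he (h ▸ hE)
  obtain rfl : E = E' := hd.elim hE hE' (Set.not_disjoint_iff.2 ⟨x, hx, hFE' (hEF hx)⟩)
  rwa [hEF.antisymm hFE']

lemma eq_of_coarser_of_coarser {n : ℕ} {P₁ P₂ : Set (Set (ZMod n))}
    (hd₁ : P₁.PairwiseDisjoint id) (he₁ : ∅ ∉ P₁) (hd₂ : P₂.PairwiseDisjoint id) (he₂ : ∅ ∉ P₂)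
    (h₁₂ : Coarser n P₁ P₂) (h₂₁ : Coarser n P₂ P₁) : P₁ = P₂ :=
  Set.ext fun _ =>
    ⟨mem_of_coarser_of_coarser hd₁ he₁ h₂₁ h₁₂, mem_of_coarser_of_coarser hd₂ he₂ h₁₂ h₂₁⟩

lemma mem_progression_self (n : ℕ) (δ : ZMod n) {μ : ℕ} (hμ : 0 < μ) : δ ∈ progression n δ μ :=
  ⟨0, hμ, by simp⟩

lemma dvd_div_of_progression_subset_coset {n d m w q μ : ℕ} {γ δ : ZMod n} (hn : n = d * m)
    (hγ : γ = ((d * w : ℕ) : ZMod n)) (hE : progression n δ μ ⊆ coset n q γ) : d ∣ n / μ := by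
  rcases Nat.lt_or_ge 1 μ with hμ | hμ
  · obtain ⟨j, hj⟩ := hE (mem_progression_self n δ (by omega : 0 < μ))
    obtain ⟨b, hb⟩ := hE ⟨1, hμ, rfl⟩
    rw [hj, hγ] at hb
    have := congrArg (ZMod.castHom (Dvd.intro m hn.symm) (ZMod d)) hb
    simp only [map_add, map_mul, map_pow, map_natCast, Nat.cast_mul, ZMod.natCast_self,
      zero_mul, zero_add, one_mul] at this
    exact (ZMod.natCast_eq_zero_iff _ _).1 this
  · interval_cases μ <;> simp [hn]

theorem progression_subset_coset_pow {n d m w q μ : ℕ} {γ δ : ZMod n} (hn : n = d * m)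
    (hd : d ≠ 0) (hm : m ≠ 0) (hγ : γ = ((d * w : ℕ) : ZMod n)) (hw : w.Coprime m)
    (hq : q.Coprime n) (hμ : 0 < μ) (hμn : μ ∣ n) (hE : progression n δ μ ⊆ coset n q γ) :
    progression n δ μ ⊆ coset n (q ^ cyclotomicExponent m q) δ := by
  have : NeZero n := ⟨hn ▸ mul_ne_zero hd hm⟩
  have hmn : m ∣ n := Dvd.intro_left d hn.symm
  obtain ⟨j, hj⟩ := hE (mem_progression_self n δ hμ)
  obtain ⟨e, he⟩ := dvd_div_of_progression_subset_coset hn hγ hE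
  have hme : m = e * μ := Nat.eq_of_mul_eq_mul_left (Nat.pos_of_ne_zero hd) <| by
    rw [← hn, ← Nat.mul_div_cancel' hμn, he]
    ring
  have hmeμ : m / e = μ := by
    rw [hme, Nat.mul_div_cancel_left _ (Nat.pos_of_ne_zero (left_ne_zero_of_mul (hme ▸ hm)))]
  have hmem : ∀ K b, δ + ((K * (n / μ) : ℕ) : ZMod n) = γ * (q : ZMod n) ^ b →
      w * q ^ j + K * e ≡ w * q ^ b [MOD m] := by
    intro K b h
    rw [hj, hγ, he] at h
    rw [← natCast_mul_eq_natCast_mul_iff hn hd]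
    push_cast at h ⊢
    linear_combination h
  have hall : ∀ K, ∃ b, w * q ^ j + K * e ≡ w * q ^ b [MOD m] := by
    intro K
    obtain ⟨b, hb⟩ := hE ⟨K % μ, Nat.mod_lt K hμ, rfl⟩
    have hKe := mul_modEq_mod_div_mul (Dvd.intro μ hme.symm) K
    rw [hmeμ] at hKe
    exact ⟨b, (hKe.add_left _).trans (hmem _ _ hb)⟩
  rintro _ ⟨K, hK, rfl⟩
  obtain ⟨b, hb⟩ := hE ⟨K, hK, rfl⟩
  obtain ⟨c, hc⟩ := ((ZMod.isUnit_iff_coprime q n).2 hq).isOfFinOrder.exists_pow_eq_mul_pow_pow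
    (modEq_cyclotomicExponent hm (hq.coprime_dvd_right hmn) hw hall (hmem K b hb)).symm
  exact ⟨c, by rw [hb, hc, hj]; push_cast; ring⟩

lemma exists_eq_natCast_mul_coprime {n : ℕ} (hn : 0 < n) (γ : ZMod n) :
    ∃ d w, n = d * (n / Nat.gcd γ.val n) ∧ d ≠ 0 ∧ n / Nat.gcd γ.val n ≠ 0 ∧
      γ = ((d * w : ℕ) : ZMod n) ∧ w.Coprime (n / Nat.gcd γ.val n) := by
  have : NeZero n := ⟨hn.ne'⟩
  have hd := Nat.gcd_pos_of_pos_right γ.val hn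
  refine ⟨_, γ.val / Nat.gcd γ.val n, (Nat.mul_div_cancel' (Nat.gcd_dvd_right _ _)).symm, hd.ne',
    (div_gcd_pos hn.ne').ne', ?_, Nat.coprime_div_gcd_div_gcd hd⟩
  rw [Nat.mul_div_cancel' (Nat.gcd_dvd_left _ _), ZMod.natCast_zmod_val]

theorem isEqDiffDecomp_cosets_pow_omegaGamma {n q : ℕ} (hn : 0 < n) (hq : 1 < q)
    (hco : q.Coprime n) (γ : ZMod n) :
    IsEqDiffDecomp n q γ
      {E | ∃ j < omegaGamma n q γ, E = coset n (q ^ omegaGamma n q γ) (γ * (q : ZMod n) ^ j)} := by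
  have : NeZero n := ⟨hn.ne'⟩
  obtain ⟨d, w, hnd, hd, hm, hγ, hw⟩ := exists_eq_natCast_mul_coprime hn γ
  set m := n / Nat.gcd γ.val n
  have hmn : m ∣ n := Dvd.intro_left d hnd.symm
  have hqm : q.Coprime m := hco.coprime_dvd_right hmn
  have hω : omegaGamma n q γ = cyclotomicExponent m q := rfl
  have hs : 1 < q ^ cyclotomicExponent m q :=
    Nat.one_lt_pow (cyclotomicExponent_pos hm hqm).ne' hq
  refine isEqDiffDecomp_cosets_pow hco (hω ▸ cyclotomicExponent_pos hm hqm) fun j => ?_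
  have hδ : γ * (q : ZMod n) ^ j = ((d * (w * q ^ j) : ℕ) : ZMod n) := by
    rw [hγ]; push_cast; ring
  rw [hδ, hω, coset_eq_progression hnd hd hm hs (hw.mul_left (hqm.pow_left j))
    (pow_cyclotomicExponent_modEq_one_rad m q) (pow_cyclotomicExponent_modEq_one_four hqm)]
  exact ⟨_, _, div_gcd_pos hm, (Nat.div_dvd_of_dvd (Nat.gcd_dvd_right _ _)).trans hmn, rfl⟩

theorem coarser_cosets_pow_omegaGamma {n q : ℕ} (hn : 0 < n) (hco : q.Coprime n) (γ : ZMod n)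
    {P : Set (Set (ZMod n))} (hP : IsEqDiffDecomp n q γ P) :
    Coarser n {E | ∃ j < omegaGamma n q γ,
      E = coset n (q ^ omegaGamma n q γ) (γ * (q : ZMod n) ^ j)} P := by
  obtain ⟨d, w, hnd, hd, hm, hγ, hw⟩ := exists_eq_natCast_mul_coprime hn γ
  refine coarser_cosets_pow
    (cyclotomicExponent_pos hm (hco.coprime_dvd_right (Dvd.intro_left d hnd.symm))) fun E hE => ?_
  obtain ⟨δ, μ, hμ, hμn, rfl⟩ := hP.1 E hE
  have hsub : progression n δ μ ⊆ coset n q γ := hP.2.1 ▸ Set.subset_sUnion_of_mem hE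
  exact ⟨δ, hsub (mem_progression_self n δ hμ),
    progression_subset_coset_pow hnd hd hm hγ hw hco hμ hμn hsub⟩

/-- The `q^(ω_γ)`-cyclotomic decomposition of `c_{n/q}(γ)` is an equal-difference
decomposition, and it is the unique coarsest one. -/
theorem coarsest_eq_diff_decomposition (n q : ℕ) (hn : 0 < n)
    (hq : ∃ p k : ℕ, p.Prime ∧ 0 < k ∧ q = p ^ k) (hco : Nat.Coprime q n) (γ : ZMod n) :
    IsEqDiffDecomp n q γ
      {E | ∃ j < omegaGamma n q γ,
        E = coset n (q ^ omegaGamma n q γ) (γ * (q : ZMod n) ^ j)} ∧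
    (∀ P : Set (Set (ZMod n)), IsEqDiffDecomp n q γ P →
      Coarser n {E | ∃ j < omegaGamma n q γ,
        E = coset n (q ^ omegaGamma n q γ) (γ * (q : ZMod n) ^ j)} P) ∧
    (∀ P : Set (Set (ZMod n)), IsEqDiffDecomp n q γ P →
      (∀ P' : Set (Set (ZMod n)), IsEqDiffDecomp n q γ P' → Coarser n P P') →
      P = {E | ∃ j < omegaGamma n q γ,
        E = coset n (q ^ omegaGamma n q γ) (γ * (q : ZMod n) ^ j)}) := by
  obtain ⟨p, k, hp, hk, rfl⟩ := hq
  have hC := isEqDiffDecomp_cosets_pow_omegaGamma hn (Nat.one_lt_pow hk.ne' hp.one_lt) hco γ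
  have hcoarsest := fun P (hP : IsEqDiffDecomp n _ γ P) => coarser_cosets_pow_omegaGamma hn hco γ hP
  refine ⟨hC, hcoarsest, fun P hP hmax => ?_⟩
  exact eq_of_coarser_of_coarser hP.2.2.1 hP.2.2.2 hC.2.2.1 hC.2.2.2 (hmax _ hC) (hcoarsest P hP)
end

section
/- With ω_γ defined as the order data of the coarsest equal-difference decomposition, every equal-difference subset E of c_{n/q}(γ) is contained in one of the q^{ω_γ}-cyclotomic cosets of γ q^j (j = 0, …, ω_γ − 1); equivalently, these cosets give the longest arithmetic sequences contained in c_{n/q}(γ). -/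
/-!
Write `G = gcd(γ, n)` and `m = n / G = n_γ`; multiplication by powers of `q` preserves the gcd
with `n`, so every term `δ + k (n/μ)` of the progression has gcd `G` with `n`, for all `k ∈ ℕ`.
This forces `G · rad m ∣ n/μ`: otherwise some prime `p ∣ m` could be made to divide
`(δ + k (n/μ)) / G`. A relation `δ q^c = δ + k (n/μ)` becomes, after dividing by `G`,
`δ' q^c ≡ δ' + k d' (mod m)` with `δ'` a unit and `rad m ∣ d'`, so `q^c ≡ 1 (mod rad m)`.
When `8 ∣ m`, `q^c` takes only the two values `1, q` modulo 8, so two of the terms with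
`k = 0, 1, 2` agree modulo 8, giving `4 ∣ d'` and hence `q^c ≡ 1 (mod 4)`. Either way `ω_γ ∣ c`,
so the whole progression lies in the `q^(ω_γ)`-cyclotomic coset of `δ`.
-/

lemma add_mul_mem_progression {n μ : ℕ} (δ : ZMod n) (hμ : 0 < μ) (hμn : μ ∣ n) (k : ℕ) :
    δ + ((k * (n / μ) : ℕ) : ZMod n) ∈ progression n δ μ := by
  refine ⟨k % μ, Nat.mod_lt k hμ, ?_⟩
  have hn : ((μ * (n / μ) : ℕ) : ZMod n) = 0 := by
    rw [Nat.mul_div_cancel' hμn, ZMod.natCast_self]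
  conv_lhs => rw [← Nat.mod_add_div k μ]
  push_cast at hn ⊢
  linear_combination ((k / μ : ℕ) : ZMod n) * hn

lemma exists_pos_pow_natCast_eq_one {N q : ℕ} (hN : N ≠ 0) (hq : q.Coprime N) :
    ∃ t, 0 < t ∧ (q : ZMod N) ^ t = 1 :=
  ⟨N.totient, Nat.totient_pos.mpr (Nat.pos_of_ne_zero hN), by
    exact_mod_cast (ZMod.natCast_eq_natCast_iff _ _ _).mpr (Nat.ModEq.pow_totient hq)⟩

lemma exists_eq_mul_pow_of_mem_coset {n q : ℕ} [NeZero n] (hq : q.Coprime n) {γ δ x : ZMod n}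
    (hδ : δ ∈ coset n q γ) (hx : x ∈ coset n q γ) : ∃ c, x = δ * (q : ZMod n) ^ c := by
  obtain ⟨a, rfl⟩ := hδ
  obtain ⟨b, rfl⟩ := hx
  obtain ⟨t, ht, hqt⟩ := exists_pos_pow_natCast_eq_one (NeZero.ne n) hq
  obtain ⟨t, rfl⟩ := Nat.exists_eq_add_one_of_ne_zero ht.ne'
  refine ⟨b + t * a, ?_⟩
  rw [mul_assoc, ← pow_add, show a + (b + t * a) = b + (t + 1) * a by ring, pow_add, pow_mul,
    hqt, one_pow, mul_one]

lemma gcd_val_natCast {n : ℕ} (y : ℕ) : Nat.gcd (y : ZMod n).val n = Nat.gcd y n := by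
  rw [ZMod.val_natCast, ← Nat.gcd_rec, Nat.gcd_comm]

lemma gcd_val_mul_natCast {n k : ℕ} [NeZero n] (x : ZMod n) (hk : k.Coprime n) :
    Nat.gcd (x * k).val n = Nat.gcd x.val n := by
  rw [← ZMod.natCast_zmod_val x, ← Nat.cast_mul, gcd_val_natCast, gcd_val_natCast,
    hk.gcd_mul_right_cancel]

lemma gcd_val_of_mem_coset {n q : ℕ} [NeZero n] (hq : q.Coprime n) {γ x : ZMod n}
    (hx : x ∈ coset n q γ) : Nat.gcd x.val n = Nat.gcd γ.val n := by
  obtain ⟨j, rfl⟩ := hx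
  exact_mod_cast gcd_val_mul_natCast γ (hq.pow_left j)

lemma mul_pow_mem_coset_pow {n : ℕ} (γ : ZMod n) (q : ℕ) {ω c : ℕ} (a : ℕ) (hc : ω ∣ c) :
    γ * (q : ZMod n) ^ a * (q : ZMod n) ^ c ∈ coset n (q ^ ω) (γ * (q : ZMod n) ^ (a % ω)) := by
  obtain ⟨c, rfl⟩ := hc
  refine ⟨a / ω + c, ?_⟩
  push_cast
  rw [mul_assoc, mul_assoc, ← pow_add, ← pow_mul, ← pow_add]
  congr 2
  have := Nat.mod_add_div a ω
  rw [Nat.mul_add]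
  omega

lemma exists_prime_dvd_add_mul {p d : ℕ} (hp : p.Prime) (hd : ¬ p ∣ d) (a : ℕ) :
    ∃ k, p ∣ a + k * d := by
  have := Fact.mk hp
  have hd0 : (d : ZMod p) ≠ 0 := by rwa [Ne, ZMod.natCast_eq_zero_iff]
  refine ⟨(-(a : ZMod p) / d).val, ?_⟩
  rw [← ZMod.natCast_eq_zero_iff]
  push_cast
  rw [ZMod.natCast_zmod_val, div_mul_cancel₀ _ hd0, add_neg_cancel]

lemma mul_rad_dvd_of_forall_gcd_eq {n a d G : ℕ} (hn : n ≠ 0)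
    (h : ∀ k, Nat.gcd (a + k * d) n = G) : G * rad (n / G) ∣ d := by
  have hG : ∀ k, G ∣ a + k * d ∧ G ∣ n := fun k =>
    h k ▸ ⟨Nat.gcd_dvd_left _ _, Nat.gcd_dvd_right _ _⟩
  have hGa : G ∣ a := by simpa using (hG 0).1
  have hGd : G ∣ d := (Nat.dvd_add_right hGa).mp (by simpa using (hG 1).1)
  have hGn : G ∣ n := (hG 0).2
  have hG0 : G ≠ 0 := by rintro rfl; exact hn (zero_dvd_iff.mp hGn)
  obtain ⟨a', rfl⟩ := hGa
  obtain ⟨d', rfl⟩ := hGd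
  refine mul_dvd_mul_left G (Finset.prod_primes_dvd d'
    (fun p hp => (Nat.prime_of_mem_primeFactors hp).prime) fun p hp => ?_)
  have hp := Nat.prime_of_mem_primeFactors hp
  by_contra hpd
  obtain ⟨k, hk⟩ := exists_prime_dvd_add_mul hp hpd a'
  have hGp : G * p ∣ Nat.gcd (G * a' + k * (G * d')) n := Nat.dvd_gcd
    (by rw [mul_left_comm, ← Nat.mul_add]; exact mul_dvd_mul_left G hk)
    (Nat.mul_dvd_of_dvd_div hGn (Nat.dvd_of_mem_primeFactors ‹_›))
  rw [h k] at hGp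
  exact hp.one_lt.ne' (Nat.dvd_one.mp ((Nat.mul_dvd_mul_iff_left (Nat.pos_of_ne_zero hG0)).mp
    (by simpa using hGp)))

lemma pow_modEq_one_of_mul_pow_modEq {m M a d q k c : ℕ} (hM : M ∣ m) (hd : M ∣ d)
    (ha : a.Coprime M) (h : a * q ^ c ≡ a + k * d [MOD m]) : q ^ c ≡ 1 [MOD M] := by
  refine Nat.ModEq.cancel_left_of_coprime ha.symm ?_
  calc a * q ^ c ≡ a + k * d [MOD M] := h.of_dvd hM
    _ ≡ a + 0 [MOD M] := Nat.ModEq.add_left a (Nat.modEq_zero_iff_dvd.mpr (hd.mul_left k))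
    _ = a * 1 := by ring

lemma two_mul_eq_zero_of_sq_eq_one {R : Type*} [CommRing R] {a q d : R} (hq : q ^ 2 = 1)
    (h₁ : ∃ c : ℕ, a * q ^ c = a + d) (h₂ : ∃ c : ℕ, a * q ^ c = a + 2 * d) : 2 * d = 0 := by
  obtain ⟨c₁, h₁⟩ := h₁
  obtain ⟨c₂, h₂⟩ := h₂
  rw [pow_eq_pow_mod c₁ hq] at h₁
  rw [pow_eq_pow_mod c₂ hq] at h₂
  rcases Nat.mod_two_eq_zero_or_one c₁ with e₁ | e₁ <;>
    rcases Nat.mod_two_eq_zero_or_one c₂ with e₂ | e₂ <;>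
    simp only [e₁, e₂, pow_zero, pow_one, mul_one] at h₁ h₂
  · linear_combination -2 * h₁
  · linear_combination -2 * h₁
  · linear_combination -h₂
  · linear_combination 2 * (h₁ - h₂)

lemma sq_natCast_zmod_eight_eq_one_of_odd {q : ℕ} (hq : Odd q) : (q : ZMod 8) ^ 2 = 1 := by
  obtain ⟨t, rfl⟩ := hq
  obtain ⟨s, hs⟩ := Nat.even_mul_succ_self t
  have h : (2 * t + 1) ^ 2 = 8 * s + 1 := by linear_combination 4 * hs
  rw [← Nat.cast_pow, h]
  push_cast
  rw [show (8 : ZMod 8) = 0 from rfl, zero_mul, zero_add]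

lemma four_dvd_of_forall_exists_mul_pow_modEq {m q a d : ℕ} (h8 : 8 ∣ m) (hq : q.Coprime m)
    (h : ∀ k, ∃ c, a * q ^ c ≡ a + k * d [MOD m]) : 4 ∣ d := by
  have hodd : Odd q := (hq.coprime_dvd_right (dvd_trans (by norm_num) h8)).odd_of_right
  have hcast (k : ℕ) : ∃ c : ℕ, (a : ZMod 8) * (q : ZMod 8) ^ c = a + k * d := by
    obtain ⟨c, hc⟩ := h k
    exact ⟨c, by exact_mod_cast (ZMod.natCast_eq_natCast_iff _ _ _).mpr (hc.of_dvd h8)⟩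
  have h2d := two_mul_eq_zero_of_sq_eq_one (sq_natCast_zmod_eight_eq_one_of_odd hodd)
    (by simpa using hcast 1) (by exact_mod_cast hcast 2)
  have : 8 ∣ 2 * d := (ZMod.natCast_eq_zero_iff _ 8).mp (by exact_mod_cast h2d)
  omega

lemma orderOf_natCast_dvd_of_pow_modEq_one {R q c : ℕ} (h : q ^ c ≡ 1 [MOD R]) :
    orderOf (q : ZMod R) ∣ c :=
  orderOf_dvd_of_pow_eq_one (by exact_mod_cast (ZMod.natCast_eq_natCast_iff _ _ _).mpr h)

lemma two_mul_orderOf_dvd {R q c : ℕ} (h3 : q ^ orderOf (q : ZMod R) % 4 = 3)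
    (hR : q ^ c ≡ 1 [MOD R]) (h4 : q ^ c ≡ 1 [MOD 4]) : 2 * orderOf (q : ZMod R) ∣ c := by
  obtain ⟨t, rfl⟩ := orderOf_natCast_dvd_of_pow_modEq_one hR
  have h3' : ((q ^ orderOf (q : ZMod R) : ℕ) : ZMod 4) = -1 := by
    rw [← ZMod.natCast_mod, h3]; rfl
  have h4' : ((q ^ (orderOf (q : ZMod R) * t) : ℕ) : ZMod 4) = 1 := by
    exact_mod_cast (ZMod.natCast_eq_natCast_iff _ _ _).mpr h4
  rw [pow_mul, Nat.cast_pow, h3', neg_one_pow_eq_one_iff_even (by decide)] at h4'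
  obtain ⟨s, rfl⟩ := h4'
  exact ⟨s, by ring⟩

lemma omegaGamma_dvd {n q c : ℕ} {γ : ZMod n}
    (hrad : q ^ c ≡ 1 [MOD rad (n / Nat.gcd γ.val n)])
    (h4 : 8 ∣ n / Nat.gcd γ.val n → q ^ c ≡ 1 [MOD 4]) : omegaGamma n q γ ∣ c := by
  unfold omegaGamma
  split_ifs with h
  · exact two_mul_orderOf_dvd h.1 hrad (h4 h.2)
  · exact orderOf_natCast_dvd_of_pow_modEq_one hrad

lemma omegaGamma_pos {n q : ℕ} (hq : q.Coprime n) (γ : ZMod n) : 0 < omegaGamma n q γ := by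
  set R := rad (n / Nat.gcd γ.val n)
  have hR : R ≠ 0 :=
    Finset.prod_ne_zero_iff.mpr fun p hp => (Nat.prime_of_mem_primeFactors hp).ne_zero
  have hqR : q.Coprime R := hq.coprime_dvd_right
    ((Nat.prod_primeFactors_dvd _).trans (Nat.div_dvd_of_dvd (Nat.gcd_dvd_right _ _)))
  have hr := (isOfFinOrder_iff_pow_eq_one.mpr (exists_pos_pow_natCast_eq_one hR hqR)).orderOf_pos
  unfold omegaGamma
  split_ifs <;> omega

lemma pow_modEq_one_of_forall_gcd_eq {n q a d G k c : ℕ} (hn : n ≠ 0) (hq : q.Coprime n)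
    (hG : ∀ k, Nat.gcd (a + k * d) n = G) (hC : ∀ k, ∃ c, a * q ^ c ≡ a + k * d [MOD n])
    (h : a * q ^ c ≡ a + k * d [MOD n]) :
    q ^ c ≡ 1 [MOD rad (n / G)] ∧ (8 ∣ n / G → q ^ c ≡ 1 [MOD 4]) := by
  have hrad := mul_rad_dvd_of_forall_gcd_eq hn hG
  have hGa : Nat.gcd a n = G := by simpa using hG 0
  have hGpos : 0 < G := hGa ▸ Nat.gcd_pos_of_pos_right a (Nat.pos_of_ne_zero hn)
  have hcop : (a / G).Coprime (n / G) := hGa ▸ Nat.coprime_div_gcd_div_gcd (hGa ▸ hGpos)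
  obtain ⟨a', rfl⟩ : G ∣ a := hGa ▸ Nat.gcd_dvd_left a n
  obtain ⟨m, rfl⟩ : G ∣ n := hGa ▸ Nat.gcd_dvd_right _ n
  obtain ⟨d', rfl⟩ := dvd_of_mul_right_dvd hrad
  simp only [Nat.mul_div_cancel_left _ hGpos] at hcop hrad ⊢
  have hcancel {k c : ℕ} (h : G * a' * q ^ c ≡ G * a' + k * (G * d') [MOD G * m]) :
      a' * q ^ c ≡ a' + k * d' [MOD m] :=
    Nat.ModEq.mul_left_cancel' hGpos.ne' (by convert h using 1 <;> ring)
  refine ⟨pow_modEq_one_of_mul_pow_modEq (Nat.prod_primeFactors_dvd m)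
    (Nat.dvd_of_mul_dvd_mul_left hGpos hrad)
    (hcop.coprime_dvd_right (Nat.prod_primeFactors_dvd m)) (hcancel h), fun h8 => ?_⟩
  have h4 : 4 ∣ m := dvd_trans (by norm_num) h8
  exact pow_modEq_one_of_mul_pow_modEq h4
    (four_dvd_of_forall_exists_mul_pow_modEq h8 (hq.coprime_dvd_right (Dvd.intro_left G rfl))
      fun k => (hC k).imp fun _ => hcancel)
    (hcop.coprime_dvd_right h4) (hcancel h)

lemma omegaGamma_dvd_of_forall_add_mul_mem_coset {n q d k c : ℕ} [NeZero n] (hq : q.Coprime n)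
    {γ δ : ZMod n} (hmem : ∀ k : ℕ, δ + ((k * d : ℕ) : ZMod n) ∈ coset n q γ)
    (h : δ * (q : ZMod n) ^ c = δ + ((k * d : ℕ) : ZMod n)) : omegaGamma n q γ ∣ c := by
  have hcast (k c : ℕ) : δ * (q : ZMod n) ^ c = δ + ((k * d : ℕ) : ZMod n) ↔
      δ.val * q ^ c ≡ δ.val + k * d [MOD n] := by
    rw [← ZMod.natCast_eq_natCast_iff]
    push_cast [ZMod.natCast_zmod_val]
    rfl
  have hG (k : ℕ) : Nat.gcd (δ.val + k * d) n = Nat.gcd γ.val n := by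
    rw [← gcd_val_natCast, ← gcd_val_of_mem_coset hq (hmem k)]
    push_cast [ZMod.natCast_zmod_val]
    rfl
  have hδ : δ ∈ coset n q γ := by simpa using hmem 0
  have hC (k : ℕ) : ∃ c, δ.val * q ^ c ≡ δ.val + k * d [MOD n] :=
    (exists_eq_mul_pow_of_mem_coset hq hδ (hmem k)).imp fun c hc => (hcast k c).mp hc.symm
  obtain ⟨hrad, h4⟩ := pow_modEq_one_of_forall_gcd_eq (NeZero.ne n) hq hG hC ((hcast k c).mp h)
  exact omegaGamma_dvd hrad h4

theorem eq_diff_subset_in_coarsest_part_general (n q : ℕ) (hn : 0 < n)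
    (hco : Nat.Coprime q n) (γ : ZMod n)
    (E : Set (ZMod n)) (hE : EqDiffSubset n E) (hsub : E ⊆ coset n q γ) :
    ∃ j < omegaGamma n q γ,
      E ⊆ coset n (q ^ omegaGamma n q γ) (γ * (q : ZMod n) ^ j) := by
  have : NeZero n := ⟨hn.ne'⟩
  obtain ⟨δ, μ, hμ, hμn, rfl⟩ := hE
  have hmem (k : ℕ) : δ + ((k * (n / μ) : ℕ) : ZMod n) ∈ coset n q γ :=
    hsub (add_mul_mem_progression δ hμ hμn k)
  have hδ : δ ∈ coset n q γ := by simpa using hmem 0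
  obtain ⟨a, rfl⟩ := id hδ
  refine ⟨a % omegaGamma n q γ, Nat.mod_lt _ (omegaGamma_pos hco γ), ?_⟩
  rintro x ⟨k, -, rfl⟩
  obtain ⟨c, hc⟩ := exists_eq_mul_pow_of_mem_coset hco hδ (hmem k)
  rw [hc]
  exact mul_pow_mem_coset_pow γ q a (omegaGamma_dvd_of_forall_add_mul_mem_coset hco hmem hc.symm)

/-- Every equal-difference subset of `c_{n/q}(γ)` is contained in one of the
`q^(ω_γ)`-cyclotomic cosets `c_{n/q^(ω_γ)}(γ q^j)`, `j = 0, …, ω_γ - 1`. -/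
theorem eq_diff_subset_in_coarsest_part (n q : ℕ) (hn : 0 < n)
    (hq : ∃ p k : ℕ, p.Prime ∧ 0 < k ∧ q = p ^ k) (hco : Nat.Coprime q n) (γ : ZMod n)
    (E : Set (ZMod n)) (hE : EqDiffSubset n E) (hsub : E ⊆ coset n q γ) :
    ∃ j < omegaGamma n q γ,
      E ⊆ coset n (q ^ omegaGamma n q γ) (γ * (q : ZMod n) ^ j) :=
  eq_diff_subset_in_coarsest_part_general n q hn hco γ E hE hsub
end
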